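/- arXiv:2307.03382 — 13 statements merged into one kernel-verified Lean document; each statement's English description precedes it below -/
import Mathlib

section
/- With r > 1, β ∈ [0,1], and 0 ≤ f < t ≤ 1, the thresholds satisfy P_vs < P_n ≤ P_vu, i.e. f/(r·t + f) < 1/(1+r) ≤ (1 - β·f)/(1 + r·(1 - β·t) - β·f). -/
open Set

/-- Recklessness threshold for signaled V2V drivers. -/
noncomputable def Pvs (r f t : ℝ) : ℝ := f / (r * t + f)

/-- Recklessness threshold for non-V2V drivers. -/
noncomputable def Pn (r : ℝ) : ℝ := 1 / (1 + r)

/-- Recklessness threshold for unsignaled V2V drivers. -/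
noncomputable def Pvu (r β f t : ℝ) : ℝ := (1 - β * f) / (1 + r * (1 - β * t) - β * f)

/-- Probability `σ(P)` that a warning signal is displayed when the accident probability is `P`. -/
noncomputable def sig (β f t P : ℝ) : ℝ := β * (P * t + (1 - P) * f)

/-- A Bayesian equilibrium with accident probability `P`:
`xnC, xnR` are the masses of careful/reckless non-V2V drivers, `cu, ρu` the fractions of the
unsignaled V2V population (of mass `(1-σ(P))·y`) choosing Careful/Reckless, and `cs, ρs` the
fractions of the signaled V2V population (of mass `σ(P)·y`) choosing Careful/Reckless. -/
structure BayesEq (r y β f t P xnC xnR cu ρu cs ρs : ℝ) : Prop where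
  xnC_nonneg : 0 ≤ xnC
  xnR_nonneg : 0 ≤ xnR
  cu_nonneg : 0 ≤ cu
  ρu_nonneg : 0 ≤ ρu
  cs_nonneg : 0 ≤ cs
  ρs_nonneg : 0 ≤ ρs
  sum_n : xnC + xnR = 1 - y
  sum_u : cu + ρu = 1
  sum_s : cs + ρs = 1
  best_nR : 0 < xnR → r * P ≤ 1 - P
  best_nC : 0 < xnC → 1 - P ≤ r * P
  best_ρu : 0 < ρu * (1 - sig β f t P) * y → r * P * (1 - β * t) ≤ (1 - P) * (1 - β * f)
  best_cu : 0 < cu * (1 - sig β f t P) * y → (1 - P) * (1 - β * f) ≤ r * P * (1 - β * t)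
  best_ρs : 0 < ρs * sig β f t P * y → r * P * (β * t) ≤ (1 - P) * (β * f)
  best_cs : 0 < cs * sig β f t P * y → (1 - P) * (β * f) ≤ r * P * (β * t)

/-- Social cost of a Bayesian behavior tuple. -/
noncomputable def socialCostB (r y β f t P xnC xnR cu ρu cs ρs : ℝ) : ℝ :=
  (1 - P) * xnC + r * P * xnR +
    y * (cu * ((1 - P) * (1 - β * f)) + ρu * (r * P * (1 - β * t)) +
         cs * ((1 - P) * (β * f)) + ρs * (r * P * (β * t)))

/-- A non-Bayesian equilibrium with accident probability `P`:
`xnC, xnR` are the masses of careful/reckless non-V2V drivers, and `xvC, xvR, xvT` the masses of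
V2V drivers choosing Careful/Reckless/Trust.  The costs are `J^C = 1 - P`, `J^R = r·P` and
`J^T = (1-P)·β·f + r·P·(1-β·t)`. -/
structure NonBayesEq (r y β f t P xnC xnR xvC xvR xvT : ℝ) : Prop where
  xnC_nonneg : 0 ≤ xnC
  xnR_nonneg : 0 ≤ xnR
  xvC_nonneg : 0 ≤ xvC
  xvR_nonneg : 0 ≤ xvR
  xvT_nonneg : 0 ≤ xvT
  sum_n : xnC + xnR = 1 - y
  sum_v : xvC + xvR + xvT = y
  best_nC : 0 < xnC → 1 - P ≤ r * P
  best_nR : 0 < xnR → r * P ≤ 1 - P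
  best_vC : 0 < xvC → 1 - P ≤ min (r * P) ((1 - P) * (β * f) + r * P * (1 - β * t))
  best_vR : 0 < xvR → r * P ≤ min (1 - P) ((1 - P) * (β * f) + r * P * (1 - β * t))
  best_vT : 0 < xvT → (1 - P) * (β * f) + r * P * (1 - β * t) ≤ min (1 - P) (r * P)

/-- Social cost of a non-Bayesian behavior tuple. -/
noncomputable def socialCostI (r β f t P xnC xnR xvC xvR xvT : ℝ) : ℝ :=
  (1 - P) * (xnC + xvC) + r * P * (xnR + xvR) +
    ((1 - P) * (β * f) + r * P * (1 - β * t)) * xvT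

/-- With `r > 1`, `β ∈ [0,1]`, and `0 ≤ f < t ≤ 1`, the thresholds satisfy
`P_vs < P_n ≤ P_vu`. -/
theorem thresholds_ordered (r β f t : ℝ) (hr : 1 < r) (hβ : β ∈ Icc (0:ℝ) 1)
    (hf : 0 ≤ f) (hft : f < t) (ht : t ≤ 1) :
    Pvs r f t < Pn r ∧ Pn r ≤ Pvu r β f t := by
  obtain ⟨hβ0, hβ1⟩ := hβ
  have hr0 : (0:ℝ) < 1 + r := by linarith
  have ht0 : 0 < t := lt_of_le_of_lt hf hft
  have hd1 : 0 < r * t + f := by nlinarith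
  have hβt : β * t ≤ 1 := by nlinarith
  have hβf : β * f < 1 := by nlinarith
  have hd2 : 0 < 1 + r * (1 - β * t) - β * f := by nlinarith
  constructor
  · rw [Pvs, Pn, div_lt_div_iff₀ hd1 hr0]
    nlinarith
  · rw [Pn, Pvu, div_le_div_iff₀ hr0 hd2]
    nlinarith [mul_le_mul_of_nonneg_left (mul_le_mul_of_nonneg_left hft.le hβ0) (by linarith : (0:ℝ) ≤ r)]
end

section
/- Assume β > 0. For every P ∈ [0,1], the reckless cost r·P and the trust cost T(P) := (1-P)·β·f + r·P·(1 - β·t) satisfy the trichotomy: r·P < T(P) if and only if P < P_vs; r·P = T(P) if and only if P = P_vs; and r·P > T(P) if and only if P > P_vs. -/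
open Set

/-- for `β > 0`, trichotomy between the reckless cost `r·P` and the trust cost
`T(P)` against the threshold `P_vs`. -/
theorem reckless_vs_trust_trichotomy (r β f t : ℝ) (hr : 1 < r) (hβ : β ∈ Icc (0:ℝ) 1)
    (hβ0 : 0 < β) (hf : 0 ≤ f) (hft : f < t) (ht : t ≤ 1) :
    ∀ P ∈ Icc (0:ℝ) 1,
      ((r * P < (1 - P) * (β * f) + r * P * (1 - β * t) ↔ P < Pvs r f t) ∧
       (r * P = (1 - P) * (β * f) + r * P * (1 - β * t) ↔ P = Pvs r f t) ∧
       ((1 - P) * (β * f) + r * P * (1 - β * t) < r * P ↔ Pvs r f t < P)) := by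
  intro P hP
  have hd : 0 < r * t + f := by nlinarith
  have key : ∀ Q : ℝ, ((1 - Q) * (β * f) + r * Q * (1 - β * t)) - r * Q
      = β * (f - Q * (r * t + f)) := by intro Q; ring
  have h1 : P < Pvs r f t ↔ P * (r * t + f) < f := by
    rw [Pvs, lt_div_iff₀ hd]
  have h2 : P = Pvs r f t ↔ P * (r * t + f) = f := by
    rw [Pvs, eq_div_iff (ne_of_gt hd)]
  have h3 : Pvs r f t < P ↔ f < P * (r * t + f) := by
    rw [Pvs, div_lt_iff₀ hd]
  refine ⟨?_, ?_, ?_⟩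
  · rw [h1]
    constructor
    · intro h; nlinarith [key P]
    · intro h; nlinarith [key P]
  · rw [h2]
    constructor
    · intro h; nlinarith [key P]
    · intro h; nlinarith [key P]
  · rw [h3]
    constructor
    · intro h; nlinarith [key P]
    · intro h; nlinarith [key P]
end

section
/- Assume β > 0, and let (x_n^C, x_n^R, x_v^C, x_v^R, x_v^T) be a non-Bayesian equilibrium with accident probability P ∈ [0,1] (either with P a fixed exogenous constant, or satisfying the endogenous consistency condition). Then: (i) if P > P_n then x_n^R = 0, and if P < P_n then x_n^R = 1 - y; (ii) if P > P_vs then x_v^R = 0, and if P < P_vs then x_v^R = y; (iii) if P < P_vs then x_v^T = 0; if P_vs < P < P_vu then x_v^T = y; and if P > P_vu then x_v^T = 0. -/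
open Set

/-- necessary conditions on any non-Bayesian equilibrium with accident
probability `P` (exogenous or endogenous), assuming `β > 0`. -/
theorem nonbayes_strict_behavior (r y β f t P xnC xnR xvC xvR xvT : ℝ)
    (hr : 1 < r) (hy : y ∈ Icc (0:ℝ) 1) (hβ : β ∈ Icc (0:ℝ) 1) (hβ0 : 0 < β)
    (hf : 0 ≤ f) (hft : f < t) (ht : t ≤ 1) (hP : P ∈ Icc (0:ℝ) 1)
    (heq : NonBayesEq r y β f t P xnC xnR xvC xvR xvT) :
    ((Pn r < P → xnR = 0) ∧ (P < Pn r → xnR = 1 - y)) ∧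
    ((Pvs r f t < P → xvR = 0) ∧ (P < Pvs r f t → xvR = y)) ∧
    ((P < Pvs r f t → xvT = 0) ∧
      (Pvs r f t < P → P < Pvu r β f t → xvT = y) ∧
      (Pvu r β f t < P → xvT = 0)) := by
  obtain ⟨hP0, hP1⟩ := hP
  obtain ⟨hβ1, hβ2⟩ := hβ
  have hr0 : (0:ℝ) < 1 + r := by linarith
  have hden1 : (0:ℝ) < r * t + f := by nlinarith
  have hβt : β * t ≤ 1 := by nlinarith
  have hβf : β * f < 1 := by nlinarith
  have hden2 : (0:ℝ) < 1 + r * (1 - β * t) - β * f := by nlinarith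
  -- key equivalences
  have key_n : Pn r < P → 1 - P < r * P := by
    intro h; rw [Pn, div_lt_iff₀ hr0] at h; nlinarith
  have key_n' : P < Pn r → r * P < 1 - P := by
    intro h; rw [Pn, lt_div_iff₀ hr0] at h; nlinarith
  have key_s : Pvs r f t < P → (1 - P) * (β * f) + r * P * (1 - β * t) < r * P := by
    intro h; rw [Pvs, div_lt_iff₀ hden1] at h; nlinarith
  have key_s' : P < Pvs r f t → r * P < (1 - P) * (β * f) + r * P * (1 - β * t) := by
    intro h; rw [Pvs, lt_div_iff₀ hden1] at h; nlinarith
  have key_u : P < Pvu r β f t → (1 - P) * (β * f) + r * P * (1 - β * t) < 1 - P := by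
    intro h; rw [Pvu, lt_div_iff₀ hden2] at h; nlinarith
  have key_u' : Pvu r β f t < P → 1 - P < (1 - P) * (β * f) + r * P * (1 - β * t) := by
    intro h; rw [Pvu, div_lt_iff₀ hden2] at h; nlinarith
  have hvsn : Pvs r f t < Pn r := by
    rw [Pvs, Pn, div_lt_div_iff₀ hden1 hr0]; nlinarith
  have hzero : ∀ x : ℝ, 0 ≤ x → ¬ (0 < x) → x = 0 := by
    intro x h1 h2; by_contra hne; exact h2 (lt_of_le_of_ne h1 (Ne.symm hne))
  refine ⟨⟨?_, ?_⟩, ⟨?_, ?_⟩, ?_, ?_, ?_⟩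
  · intro h
    refine hzero _ heq.xnR_nonneg (fun hpos => ?_)
    have := heq.best_nR hpos; have := key_n h; linarith
  · intro h
    have hC : xnC = 0 := hzero _ heq.xnC_nonneg (fun hpos => by
      have := heq.best_nC hpos; have := key_n' h; linarith)
    have := heq.sum_n; linarith
  · intro h
    refine hzero _ heq.xvR_nonneg (fun hpos => ?_)
    have h1 := (heq.best_vR hpos).trans (min_le_right _ _)
    have := key_s h; linarith
  · intro h
    have hn : P < Pn r := lt_trans h hvsn
    have hRC := key_n' hn
    have hRT := key_s' h
    have hC : xvC = 0 := hzero _ heq.xvC_nonneg (fun hpos => by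
      have := (heq.best_vC hpos).trans (min_le_left _ _); linarith)
    have hT : xvT = 0 := hzero _ heq.xvT_nonneg (fun hpos => by
      have := (heq.best_vT hpos).trans (min_le_right _ _); linarith)
    have := heq.sum_v; linarith
  · intro h
    refine hzero _ heq.xvT_nonneg (fun hpos => ?_)
    have := (heq.best_vT hpos).trans (min_le_right _ _)
    have := key_s' h; linarith
  · intro h1 h2
    have hTR := key_s h1
    have hTC := key_u h2
    have hC : xvC = 0 := hzero _ heq.xvC_nonneg (fun hpos => by
      have h3 := (heq.best_vC hpos).trans (min_le_right _ _); linarith)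
    have hR : xvR = 0 := hzero _ heq.xvR_nonneg (fun hpos => by
      have h3 := (heq.best_vR hpos).trans (min_le_right _ _); linarith)
    have := heq.sum_v; linarith
  · intro h
    refine hzero _ heq.xvT_nonneg (fun hpos => ?_)
    have := (heq.best_vT hpos).trans (min_le_left _ _)
    have := key_u' h; linarith
end

section
/- For all real numbers r, β, f, t, P̄ with r > 1, β ∈ [0,1], 0 ≤ f < t ≤ 1, and P̄ ∈ [0,1], the following identity holds: min((1-P̄)·β·f, r·P̄·β·t) + min((1-P̄)·(1-β·f), r·P̄·(1-β·t)) = min( 1 - P̄, r·P̄, (1-P̄)·β·f + r·P̄·(1-β·t) ). (That is, the optimal signal-contingent Bayesian expected cost of a V2V driver equals the minimum over the three non-Bayesian strategies Careful, Reckless, and Trust.) -/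
open Set

/-- the optimal signal-contingent Bayesian expected cost of a V2V driver equals
the minimum over the three non-Bayesian strategies Careful, Reckless and Trust. -/
theorem bayes_optimum_eq_min_of_three (r β f t Pbar : ℝ) (hr : 1 < r) (hβ : β ∈ Icc (0:ℝ) 1)
    (hf : 0 ≤ f) (hft : f < t) (ht : t ≤ 1) (hP : Pbar ∈ Icc (0:ℝ) 1) :
    min ((1 - Pbar) * (β * f)) (r * Pbar * (β * t)) +
      min ((1 - Pbar) * (1 - β * f)) (r * Pbar * (1 - β * t)) =
    min (1 - Pbar) (min (r * Pbar) ((1 - Pbar) * (β * f) + r * Pbar * (1 - β * t))) := by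
  obtain ⟨hβ0, hβ1⟩ := hβ
  obtain ⟨hP0, hP1⟩ := hP
  set a := (1 - Pbar) * (β * f) with ha
  set b := r * Pbar * (β * t) with hb
  set c := (1 - Pbar) * (1 - β * f) with hc
  set d := r * Pbar * (1 - β * t) with hd
  have key : a ≤ b ∨ d ≤ c := by
    by_contra h
    push_neg at h
    obtain ⟨h1, h2⟩ := h
    rcases eq_or_lt_of_le hβ0 with hβ | hβ
    · rw [ha, hb, ← hβ] at h1; nlinarith
    · have ht0 : 0 < t := lt_of_le_of_lt hf hft
      have hrP : r * Pbar < 1 - Pbar := by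
        have hft' : r * Pbar * t < (1 - Pbar) * f := by
          rw [ha, hb] at h1; nlinarith
        nlinarith [mul_nonneg (sub_nonneg.mpr hP1) (le_of_lt (lt_of_le_of_lt hf hft))]
      have hβt : β * t ≤ 1 := by nlinarith
      have hrP0 : 0 ≤ r * Pbar := mul_nonneg (by linarith) hP0
      have h1P : 0 < 1 - Pbar := lt_of_le_of_lt hrP0 hrP
      have hd' : r * Pbar * (1 - β * t) ≤ (1 - Pbar) * (1 - β * t) :=
        mul_le_mul_of_nonneg_right hrP.le (by linarith)
      rw [hc, hd] at h2
      nlinarith [mul_pos h1P (mul_pos hβ (sub_pos.mpr hft))]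
  have hac : a + c = 1 - Pbar := by rw [ha, hc]; ring
  have hbd : b + d = r * Pbar := by rw [hb, hd]; ring
  rcases key with hab | hdc
  · rw [min_eq_left hab]
    rcases le_total c d with hcd | hcd
    · rw [min_eq_left hcd]
      have h1 : a + c ≤ b + d := by linarith
      have h2 : a + c ≤ a + d := by linarith
      rw [show min (1 - Pbar) (min (r * Pbar) (a + d)) = 1 - Pbar from
        min_eq_left (le_min (by linarith) (by linarith))]
      linarith
    · rw [min_eq_right hcd]
      have h1 : a + d ≤ 1 - Pbar := by linarith
      have h2 : a + d ≤ r * Pbar := by linarith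
      rw [show min (1 - Pbar) (min (r * Pbar) (a + d)) = a + d from by
        rw [min_eq_right h2, min_eq_right h1]]
  · rw [min_eq_right hdc]
    rcases le_total a b with hab | hab
    · rw [min_eq_left hab]
      have h1 : a + d ≤ 1 - Pbar := by linarith
      have h2 : a + d ≤ r * Pbar := by linarith
      rw [show min (1 - Pbar) (min (r * Pbar) (a + d)) = a + d from by
        rw [min_eq_right h2, min_eq_right h1]]
    · rw [min_eq_right hab]
      have h1 : b + d ≤ 1 - Pbar := by linarith
      have h2 : b + d ≤ a + d := by linarith
      rw [show min (1 - Pbar) (min (r * Pbar) (a + d)) = r * Pbar from by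
        rw [min_eq_left (by linarith : r * Pbar ≤ a + d)]
        exact min_eq_right (by linarith)]
      linarith
end

section
/- Fix P̄ ∈ [0,1] and β₁, β₂ ∈ [0,1] with β₁ < β₂. Let x₁ be a Bayesian equilibrium for parameters (β₁, y, r, f, t) with exogenous accident probability P̄, and let x₂ be a Bayesian equilibrium for parameters (β₂, y, r, f, t) with exogenous accident probability P̄ (thresholds and σ computed with the respective βᵢ). Then the social costs satisfy 𝒥_B(x₁) ≥ 𝒥_B(x₂). -/
open Set

lemma combo_le {x x' s c c' : ℝ} (hx : 0 ≤ x) (hx' : 0 ≤ x') (hs : x + x' = s)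
    (h1 : 0 < x → c ≤ c') (h2 : 0 < x' → c' ≤ c) :
    c * x + c' * x' ≤ s * min c c' := by
  rcases eq_or_lt_of_le hx with h | h
  · rcases eq_or_lt_of_le hx' with h' | h'
    · have hs0 : s = 0 := by rw [← hs, ← h, ← h']; ring
      rw [hs0, ← h, ← h']; ring_nf; simp
    · have hxs : x' = s := by rw [← hs, ← h]; ring
      rw [min_eq_right (h2 h'), ← h, hxs, mul_zero, zero_add]
      exact le_of_eq (mul_comm c' s)
  · have hc := h1 h
    rcases eq_or_lt_of_le hx' with h' | h'
    · have hxs : x = s := by rw [← hs, ← h']; ring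
      rw [min_eq_left hc, ← h', hxs, mul_zero, add_zero]
      exact le_of_eq (mul_comm c s)
    · have hcc : c = c' := le_antisymm hc (h2 h')
      rw [hcc, min_self, ← hs]
      exact le_of_eq (by ring)

lemma combo_ge {x x' s c c' : ℝ} (hx : 0 ≤ x) (hx' : 0 ≤ x') (hs : x + x' = s) :
    s * min c c' ≤ c * x + c' * x' := by
  rw [← hs]
  nlinarith [mul_le_mul_of_nonneg_left (min_le_left c c') hx, mul_le_mul_of_nonneg_left (min_le_right c c') hx']

lemma cost_le_formula (r y β f t P xnC xnR cu ρu cs ρs : ℝ)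
    (hy : y ∈ Icc (0:ℝ) 1) (hf : 0 ≤ f) (hft : f < t) (ht : t ≤ 1)
    (hP : P ∈ Icc (0:ℝ) 1) (hβ : β ∈ Icc (0:ℝ) 1)
    (h : BayesEq r y β f t P xnC xnR cu ρu cs ρs) :
    socialCostB r y β f t P xnC xnR cu ρu cs ρs ≤
      (1 - y) * min (1 - P) (r * P) +
      y * (min ((1 - P) * (1 - β * f)) (r * P * (1 - β * t)) +
           min ((1 - P) * (β * f)) (r * P * (β * t))) := by
  obtain ⟨hy0, hy1⟩ := hy
  obtain ⟨hP0, hP1⟩ := hP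
  obtain ⟨hβ0, hβ1⟩ := hβ
  have ht0 : 0 < t := lt_of_le_of_lt hf hft
  have hP' : (0:ℝ) ≤ 1 - P := by linarith
  have htf : (0:ℝ) ≤ t - f := by linarith
  have hσdef : sig β f t P = β * (P * t + (1 - P) * f) := rfl
  have n1 : 0 ≤ P * t := mul_nonneg hP0 ht0.le
  have n2 : 0 ≤ (1 - P) * f := mul_nonneg hP' hf
  have hσ0 : 0 ≤ sig β f t P := by
    rw [hσdef]; exact mul_nonneg hβ0 (by linarith)
  have hσ1 : sig β f t P ≤ 1 := by
    rw [hσdef]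
    nlinarith [mul_nonneg hP' htf]
  have hn := combo_le h.xnC_nonneg h.xnR_nonneg h.sum_n h.best_nC h.best_nR
  rcases eq_or_lt_of_le hy0 with hy' | hy'
  · unfold socialCostB
    rw [← hy'] at hn ⊢
    simp only [mul_zero, zero_mul, add_zero, sub_zero] at hn ⊢
    linarith
  -- y > 0 from here on
  have hU : cu * ((1 - P) * (1 - β * f)) + ρu * (r * P * (1 - β * t)) ≤
      min ((1 - P) * (1 - β * f)) (r * P * (1 - β * t)) := by
    by_cases hσ : sig β f t P < 1
    · have hc : 0 < cu → (1 - P) * (1 - β * f) ≤ r * P * (1 - β * t) := fun hcu =>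
        h.best_cu (mul_pos (mul_pos hcu (by linarith)) hy')
      have hρ : 0 < ρu → r * P * (1 - β * t) ≤ (1 - P) * (1 - β * f) := fun hρu =>
        h.best_ρu (mul_pos (mul_pos hρu (by linarith)) hy')
      have hco := combo_le h.cu_nonneg h.ρu_nonneg h.sum_u hc hρ
      linarith [hco]
    · -- sig = 1, which forces β = 1, t = 1, P = 1
      have hσe : β * (P * t + (1 - P) * f) = 1 := by
        rw [← hσdef]; exact le_antisymm hσ1 (not_lt.mp hσ)
      have hs_le : P * t + (1 - P) * f ≤ 1 := by nlinarith [mul_nonneg hP' htf]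
      have hβe : β = 1 := by
        have h1β : 1 ≤ β := by nlinarith [mul_le_mul_of_nonneg_left hs_le hβ0]
        linarith
      have hse : P * t + (1 - P) * f = 1 := by rw [hβe] at hσe; linarith
      have hte : t = 1 := by
        have : 1 ≤ t := by nlinarith [mul_nonneg hP' htf]
        linarith
      have hse' : P + (1 - P) * f = 1 := by linear_combination hse - P * hte
      have h6 : (1 - P) * (1 - f) = 0 := by linear_combination -hse'
      have hf1 : f < 1 := lt_of_lt_of_le hft ht
      have hPe : P = 1 := by
        have : 1 ≤ P := by nlinarith [h6]
        linarith
      rw [hβe, hte, hPe]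
      norm_num
  have hS : cs * ((1 - P) * (β * f)) + ρs * (r * P * (β * t)) ≤
      min ((1 - P) * (β * f)) (r * P * (β * t)) := by
    by_cases hσ : 0 < sig β f t P
    · have hc : 0 < cs → (1 - P) * (β * f) ≤ r * P * (β * t) := fun hcs =>
        h.best_cs (mul_pos (mul_pos hcs hσ) hy')
      have hρ : 0 < ρs → r * P * (β * t) ≤ (1 - P) * (β * f) := fun hρs =>
        h.best_ρs (mul_pos (mul_pos hρs hσ) hy')
      have hco := combo_le h.cs_nonneg h.ρs_nonneg h.sum_s hc hρ
      linarith [hco]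
    · have hσe : β * (P * t + (1 - P) * f) = 0 := by
        rw [← hσdef]; exact le_antisymm (not_lt.mp hσ) hσ0
      have m1 : 0 ≤ β * (P * t) := mul_nonneg hβ0 n1
      have m2 : 0 ≤ β * ((1 - P) * f) := mul_nonneg hβ0 n2
      have e1 : β * (P * t) = 0 := by linarith [hσe, m1, m2]
      have e2 : β * ((1 - P) * f) = 0 := by linarith [hσe, m1, m2]
      have c1 : (1 - P) * (β * f) = 0 := by linear_combination e2
      have c2 : r * P * (β * t) = 0 := by linear_combination r * e1
      rw [c1, c2]
      simp
  have hbr := mul_le_mul_of_nonneg_left (add_le_add hU hS) hy0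
  unfold socialCostB
  linarith [hbr, hn]

lemma formula_ge_cost (r y β f t P xnC xnR cu ρu cs ρs : ℝ)
    (hy : y ∈ Icc (0:ℝ) 1)
    (h : BayesEq r y β f t P xnC xnR cu ρu cs ρs) :
    (1 - y) * min (1 - P) (r * P) +
      y * (min ((1 - P) * (1 - β * f)) (r * P * (1 - β * t)) +
           min ((1 - P) * (β * f)) (r * P * (β * t))) ≤
    socialCostB r y β f t P xnC xnR cu ρu cs ρs := by
  obtain ⟨hy0, hy1⟩ := hy
  have h1 := combo_ge (c := 1 - P) (c' := r * P) h.xnC_nonneg h.xnR_nonneg h.sum_n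
  have h2 := combo_ge (c := (1 - P) * (1 - β * f)) (c' := r * P * (1 - β * t))
    h.cu_nonneg h.ρu_nonneg h.sum_u
  have h3 := combo_ge (c := (1 - P) * (β * f)) (c' := r * P * (β * t))
    h.cs_nonneg h.ρs_nonneg h.sum_s
  rw [one_mul] at h2 h3
  have hbr := mul_le_mul_of_nonneg_left (add_le_add h2 h3) hy0
  unfold socialCostB
  linarith [hbr, h1]

lemma formula_mono (r f t P β₁ β₂ : ℝ) (hr : 0 ≤ r) (hP : P ∈ Icc (0:ℝ) 1)
    (hf : 0 ≤ f) (ht : 0 ≤ t) (hβ0 : 0 ≤ β₁) (hββ : β₁ ≤ β₂) :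
    min ((1 - P) * (1 - β₂ * f)) (r * P * (1 - β₂ * t)) +
      min ((1 - P) * (β₂ * f)) (r * P * (β₂ * t)) ≤
    min ((1 - P) * (1 - β₁ * f)) (r * P * (1 - β₁ * t)) +
      min ((1 - P) * (β₁ * f)) (r * P * (β₁ * t)) := by
  obtain ⟨hP0, hP1⟩ := hP
  have ha : (0:ℝ) ≤ 1 - P := by linarith
  have hb : 0 ≤ r * P := mul_nonneg hr hP0
  have hβ0' : 0 ≤ β₂ := le_trans hβ0 hββ
  have hkey : 0 ≤ (β₂ - β₁) := sub_nonneg.mpr hββ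
  rcases le_total ((1 - P) * f) (r * P * t) with h | h
  · have m1 : min ((1 - P) * (β₁ * f)) (r * P * (β₁ * t)) = (1 - P) * (β₁ * f) :=
      min_eq_left (by nlinarith [mul_le_mul_of_nonneg_left h hβ0])
    have m2 : min ((1 - P) * (β₂ * f)) (r * P * (β₂ * t)) = (1 - P) * (β₂ * f) :=
      min_eq_left (by nlinarith [mul_le_mul_of_nonneg_left h hβ0'])
    rw [m1, m2, ← min_add_add_right, ← min_add_add_right]
    refine min_le_min (le_of_eq (by ring)) ?_
    nlinarith [mul_nonneg hkey (sub_nonneg.mpr h)]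
  · have m1 : min ((1 - P) * (β₁ * f)) (r * P * (β₁ * t)) = r * P * (β₁ * t) :=
      min_eq_right (by nlinarith [mul_le_mul_of_nonneg_left h hβ0])
    have m2 : min ((1 - P) * (β₂ * f)) (r * P * (β₂ * t)) = r * P * (β₂ * t) :=
      min_eq_right (by nlinarith [mul_le_mul_of_nonneg_left h hβ0'])
    rw [m1, m2, ← min_add_add_right, ← min_add_add_right]
    refine min_le_min ?_ (le_of_eq (by ring))
    nlinarith [mul_nonneg hkey (sub_nonneg.mpr h)]

/-- with an exogenous accident probability, the equilibrium social cost of the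
Bayesian model is non-increasing in the information quality `β`. -/
theorem bayes_exo_social_cost_monotone
    (r y f t Pbar β₁ β₂ xnC₁ xnR₁ cu₁ ρu₁ cs₁ ρs₁ xnC₂ xnR₂ cu₂ ρu₂ cs₂ ρs₂ : ℝ)
    (hr : 1 < r) (hy : y ∈ Icc (0:ℝ) 1) (hf : 0 ≤ f) (hft : f < t) (ht : t ≤ 1)
    (hP : Pbar ∈ Icc (0:ℝ) 1)
    (hβ₁ : β₁ ∈ Icc (0:ℝ) 1) (hβ₂ : β₂ ∈ Icc (0:ℝ) 1) (hββ : β₁ < β₂)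
    (h₁ : BayesEq r y β₁ f t Pbar xnC₁ xnR₁ cu₁ ρu₁ cs₁ ρs₁)
    (h₂ : BayesEq r y β₂ f t Pbar xnC₂ xnR₂ cu₂ ρu₂ cs₂ ρs₂) :
    socialCostB r y β₂ f t Pbar xnC₂ xnR₂ cu₂ ρu₂ cs₂ ρs₂ ≤
      socialCostB r y β₁ f t Pbar xnC₁ xnR₁ cu₁ ρu₁ cs₁ ρs₁ := by
  have ht0 : 0 ≤ t := le_trans hf hft.le
  have key := formula_mono r f t Pbar β₁ β₂ (by linarith) hP hf ht0 hβ₁.1 hββ.le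
  have hmid := mul_le_mul_of_nonneg_left key hy.1
  calc socialCostB r y β₂ f t Pbar xnC₂ xnR₂ cu₂ ρu₂ cs₂ ρs₂
      ≤ (1 - y) * min (1 - Pbar) (r * Pbar) +
        y * (min ((1 - Pbar) * (1 - β₂ * f)) (r * Pbar * (1 - β₂ * t)) +
             min ((1 - Pbar) * (β₂ * f)) (r * Pbar * (β₂ * t))) :=
        cost_le_formula r y β₂ f t Pbar xnC₂ xnR₂ cu₂ ρu₂ cs₂ ρs₂ hy hf hft ht hP hβ₂ h₂
    _ ≤ (1 - y) * min (1 - Pbar) (r * Pbar) +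
        y * (min ((1 - Pbar) * (1 - β₁ * f)) (r * Pbar * (1 - β₁ * t)) +
             min ((1 - Pbar) * (β₁ * f)) (r * Pbar * (β₁ * t))) := by linarith
    _ ≤ socialCostB r y β₁ f t Pbar xnC₁ xnR₁ cu₁ ρu₁ cs₁ ρs₁ :=
        formula_ge_cost r y β₁ f t Pbar xnC₁ xnR₁ cu₁ ρu₁ cs₁ ρs₁ hy h₁
end

section
/- Fix P̄ ∈ [0,1] and β₁, β₂ ∈ [0,1] with β₁ < β₂. Let x₁ be a non-Bayesian equilibrium for parameters (β₁, y, r, f, t) with exogenous accident probability P̄, and let x₂ be a non-Bayesian equilibrium for parameters (β₂, y, r, f, t) with exogenous accident probability P̄ (the trust cost J^T computed with the respective βᵢ). Then the social costs satisfy 𝒥_I(x₁) ≥ 𝒥_I(x₂). -/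
open Set

lemma nonbayes_cost_eq (r y β f t P xnC xnR xvC xvR xvT : ℝ)
    (h : NonBayesEq r y β f t P xnC xnR xvC xvR xvT) :
    socialCostI r β f t P xnC xnR xvC xvR xvT =
      (1 - y) * min (1 - P) (r * P) +
        y * min (min (1 - P) (r * P)) ((1 - P) * (β * f) + r * P * (1 - β * t)) := by
  set JC := 1 - P with hJC
  set JR := r * P with hJR
  set JT := (1 - P) * (β * f) + r * P * (1 - β * t) with hJT
  set m := min JC JR with hm
  set M := min m JT with hM
  have e1 : JC * xnC = m * xnC := by
    rcases h.xnC_nonneg.lt_or_eq with hp | hz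
    · rw [hm, min_eq_left (h.best_nC hp)]
    · rw [← hz]; ring
  have e2 : JR * xnR = m * xnR := by
    rcases h.xnR_nonneg.lt_or_eq with hp | hz
    · rw [hm, min_eq_right (h.best_nR hp)]
    · rw [← hz]; ring
  have e3 : JC * xvC = M * xvC := by
    rcases h.xvC_nonneg.lt_or_eq with hp | hz
    · have hb := h.best_vC hp
      rw [hM, hm, min_eq_left (le_trans hb (min_le_left _ _)),
        min_eq_left (le_trans hb (min_le_right _ _))]
    · rw [← hz]; ring
  have e4 : JR * xvR = M * xvR := by
    rcases h.xvR_nonneg.lt_or_eq with hp | hz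
    · have hb := h.best_vR hp
      rw [hM, hm, min_eq_right (le_trans hb (min_le_left _ _)),
        min_eq_left (le_trans hb (min_le_right _ _))]
    · rw [← hz]; ring
  have e5 : JT * xvT = M * xvT := by
    rcases h.xvT_nonneg.lt_or_eq with hp | hz
    · have hb := h.best_vT hp
      rw [hM, min_eq_right]
      exact le_min (le_trans hb (min_le_left _ _)) (le_trans hb (min_le_right _ _))
    · rw [← hz]; ring
  have hsn := h.sum_n
  have hsv := h.sum_v
  simp only [socialCostI, hJC, hJR, hJT]
  linear_combination e1 + e2 + e3 + e4 + e5 + m * hsn + M * hsv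

/-- with an exogenous accident probability, the equilibrium social cost of the
non-Bayesian model is non-increasing in the information quality `β`. -/
theorem nonbayes_exo_social_cost_monotone
    (r y f t Pbar β₁ β₂ xnC₁ xnR₁ xvC₁ xvR₁ xvT₁ xnC₂ xnR₂ xvC₂ xvR₂ xvT₂ : ℝ)
    (hr : 1 < r) (hy : y ∈ Icc (0:ℝ) 1) (hf : 0 ≤ f) (hft : f < t) (ht : t ≤ 1)
    (hP : Pbar ∈ Icc (0:ℝ) 1)
    (hβ₁ : β₁ ∈ Icc (0:ℝ) 1) (hβ₂ : β₂ ∈ Icc (0:ℝ) 1) (hββ : β₁ < β₂)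
    (h₁ : NonBayesEq r y β₁ f t Pbar xnC₁ xnR₁ xvC₁ xvR₁ xvT₁)
    (h₂ : NonBayesEq r y β₂ f t Pbar xnC₂ xnR₂ xvC₂ xvR₂ xvT₂) :
    socialCostI r β₂ f t Pbar xnC₂ xnR₂ xvC₂ xvR₂ xvT₂ ≤
      socialCostI r β₁ f t Pbar xnC₁ xnR₁ xvC₁ xvR₁ xvT₁ := by
  rw [nonbayes_cost_eq r y β₁ f t Pbar _ _ _ _ _ h₁,
    nonbayes_cost_eq r y β₂ f t Pbar _ _ _ _ _ h₂]
  set m := min (1 - Pbar) (r * Pbar) with hm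
  have hMle : min m ((1 - Pbar) * (β₂ * f) + r * Pbar * (1 - β₂ * t)) ≤
      min m ((1 - Pbar) * (β₁ * f) + r * Pbar * (1 - β₁ * t)) := by
    rcases le_or_gt 0 ((1 - Pbar) * f - r * Pbar * t) with hs | hs
    · have h1 : m ≤ (1 - Pbar) * (β₁ * f) + r * Pbar * (1 - β₁ * t) := by
        have := min_le_right (1 - Pbar) (r * Pbar)
        nlinarith [hβ₁.1]
      have h2 : m ≤ (1 - Pbar) * (β₂ * f) + r * Pbar * (1 - β₂ * t) := by
        have := min_le_right (1 - Pbar) (r * Pbar)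
        nlinarith [hβ₂.1]
      rw [min_eq_left h1, min_eq_left h2]
    · have h12 : (1 - Pbar) * (β₂ * f) + r * Pbar * (1 - β₂ * t) ≤
          (1 - Pbar) * (β₁ * f) + r * Pbar * (1 - β₁ * t) := by nlinarith
      exact min_le_min le_rfl h12
  have hy0 : (0:ℝ) ≤ y := hy.1
  nlinarith [mul_le_mul_of_nonneg_left hMle hy0]
end

section
/- Fix P̄ ∈ [0,1]. For the same parameters (β, y, r, f, t), let x_B be any Bayesian equilibrium with exogenous accident probability P̄ and let x_I be any non-Bayesian equilibrium with exogenous accident probability P̄. Then their social costs are equal: 𝒥_B(x_B) = 𝒥_I(x_I). -/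
open Set

private lemma mix_eq_min (a b c ρ : ℝ) (hc : 0 ≤ c) (hρ : 0 ≤ ρ) (hsum : c + ρ = 1)
    (h1 : 0 < c → a ≤ b) (h2 : 0 < ρ → b ≤ a) : c * a + ρ * b = min a b := by
  rcases hc.eq_or_lt with hc0 | hcp
  · have hρ1 : ρ = 1 := by linarith
    have hba := h2 (by linarith)
    rw [min_eq_right hba, ← hc0, hρ1]; ring
  · have hab := h1 hcp
    rcases hρ.eq_or_lt with hρ0 | hρp
    · have hc1 : c = 1 := by linarith
      rw [min_eq_left hab, ← hρ0, hc1]; ring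
    · have hba := h2 hρp
      have : a = b := le_antisymm hab hba
      rw [this, min_self]
      have : c * b + ρ * b = (c + ρ) * b := by ring
      rw [this, hsum, one_mul]

private lemma minsum_eq (Au Ru As Rs : ℝ) (h : Ru ≤ Au ∨ As ≤ Rs) :
    min Au Ru + min As Rs = min (Au + As) (min (Ru + Rs) (As + Ru)) := by
  apply le_antisymm
  · refine le_min ?_ (le_min ?_ ?_)
    · linarith [min_le_left Au Ru, min_le_left As Rs]
    · linarith [min_le_right Au Ru, min_le_right As Rs]
    · linarith [min_le_right Au Ru, min_le_left As Rs]
  · have m1 : min (Au + As) (min (Ru + Rs) (As + Ru)) ≤ Au + As := min_le_left _ _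
    have m2 : min (Au + As) (min (Ru + Rs) (As + Ru)) ≤ Ru + Rs :=
      (min_le_right _ _).trans (min_le_left _ _)
    have m3 : min (Au + As) (min (Ru + Rs) (As + Ru)) ≤ As + Ru :=
      (min_le_right _ _).trans (min_le_right _ _)
    rcases le_total Au Ru with h1 | h1 <;> rcases le_total As Rs with h2 | h2
    · rw [min_eq_left h1, min_eq_left h2]; linarith
    · rw [min_eq_left h1, min_eq_right h2]
      rcases h with h3 | h3 <;> linarith
    · rw [min_eq_right h1, min_eq_left h2]; linarith
    · rw [min_eq_right h1, min_eq_right h2]; linarith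


private lemma key_dichotomy (r β f t P : ℝ) (hr : 1 < r) (hβ0 : 0 ≤ β) (hβ1 : β ≤ 1)
    (hf : 0 ≤ f) (hft : f < t) (ht : t ≤ 1) (hP0 : 0 ≤ P) (hP1 : P ≤ 1) :
    r * P * (1 - β * t) ≤ (1 - P) * (1 - β * f) ∨ (1 - P) * (β * f) ≤ r * P * (β * t) := by
  by_contra hcon
  push_neg at hcon
  obtain ⟨h1, h2⟩ := hcon
  have ht0 : 0 < t := lt_of_le_of_lt hf hft
  have hβpos : 0 < β := by
    rcases hβ0.eq_or_lt with hb | hb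
    · rw [← hb] at h2; simp at h2
    · exact hb
  have h3 : r * P * t < (1 - P) * f := by nlinarith
  have h4 : r * P < 1 - P := by nlinarith
  have e1 : r * P * (1 - β * t) ≤ (1 - P) * (1 - β * t) := by nlinarith
  have e2 : (1 - P) * (1 - β * t) ≤ (1 - P) * (1 - β * f) := by nlinarith
  linarith

private lemma sig_eq_one (β f t P : ℝ) (hβ0 : 0 ≤ β) (hβ1 : β ≤ 1)
    (hf : 0 ≤ f) (hft : f < t) (ht : t ≤ 1) (hP0 : 0 ≤ P) (hP1 : P ≤ 1)
    (h : β * (P * t + (1 - P) * f) = 1) : P = 1 ∧ β * t = 1 := by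
  have hx0 : 0 ≤ P * t + (1 - P) * f :=
    add_nonneg (mul_nonneg hP0 (lt_of_le_of_lt hf hft).le)
      (mul_nonneg (by linarith) hf)
  have hxg : 1 ≤ P * t + (1 - P) * f := by
    nlinarith [mul_nonneg (show (0:ℝ) ≤ 1 - β by linarith) hx0]
  have hb1 : P = 1 := by
    apply le_antisymm hP1
    nlinarith [mul_nonneg hP0 (show (0:ℝ) ≤ 1 - t by linarith)]
  refine ⟨hb1, ?_⟩
  rw [hb1] at h; ring_nf at h ⊢; linarith

private lemma sig_eq_zero (β f t P : ℝ) (hβ0 : 0 ≤ β) (hβ1 : β ≤ 1)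
    (hf : 0 ≤ f) (hft : f < t) (ht : t ≤ 1) (hP0 : 0 ≤ P) (hP1 : P ≤ 1)
    (h : β * (P * t + (1 - P) * f) = 0) : β * (P * t) = 0 ∧ β * ((1 - P) * f) = 0 := by
  have ht0 : 0 < t := lt_of_le_of_lt hf hft
  have h1 : 0 ≤ β * (P * t) := mul_nonneg hβ0 (mul_nonneg hP0 ht0.le)
  have h2 : 0 ≤ β * ((1 - P) * f) := mul_nonneg hβ0 (mul_nonneg (by linarith) hf)
  constructor <;> nlinarith

private lemma sig_le_one (β f t P : ℝ) (hβ0 : 0 ≤ β) (hβ1 : β ≤ 1)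
    (hf : 0 ≤ f) (hft : f < t) (ht : t ≤ 1) (hP0 : 0 ≤ P) (hP1 : P ≤ 1) :
    β * (P * t + (1 - P) * f) ≤ 1 := by
  have ht0 : 0 < t := lt_of_le_of_lt hf hft
  have hx0 : 0 ≤ P * t + (1 - P) * f :=
    add_nonneg (mul_nonneg hP0 ht0.le) (mul_nonneg (by linarith) hf)
  nlinarith [mul_nonneg (show (0:ℝ) ≤ 1 - β by linarith) hx0,
    mul_nonneg (show (0:ℝ) ≤ 1 - P by linarith) (show (0:ℝ) ≤ t - f by linarith),
    mul_nonneg hP0 (show (0:ℝ) ≤ 1 - t by linarith)]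

/-- with the same parameters and the same exogenous accident probability, any
Bayesian equilibrium and any non-Bayesian equilibrium have equal social cost. -/
theorem exo_social_costs_equal
    (r y β f t Pbar xnC xnR cu ρu cs ρs xnC' xnR' xvC xvR xvT : ℝ)
    (hr : 1 < r) (hy : y ∈ Icc (0:ℝ) 1) (hβ : β ∈ Icc (0:ℝ) 1)
    (hf : 0 ≤ f) (hft : f < t) (ht : t ≤ 1) (hP : Pbar ∈ Icc (0:ℝ) 1)
    (hB : BayesEq r y β f t Pbar xnC xnR cu ρu cs ρs)
    (hI : NonBayesEq r y β f t Pbar xnC' xnR' xvC xvR xvT) :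
    socialCostB r y β f t Pbar xnC xnR cu ρu cs ρs =
      socialCostI r β f t Pbar xnC' xnR' xvC xvR xvT := by
  obtain ⟨hP0, hP1⟩ := hP
  obtain ⟨hy0, hy1⟩ := hy
  obtain ⟨hβ0, hβ1⟩ := hβ
  obtain ⟨Au, hAu⟩ : ∃ x : ℝ, x = (1 - Pbar) * (1 - β * f) := ⟨_, rfl⟩
  obtain ⟨Ru, hRu⟩ : ∃ x : ℝ, x = r * Pbar * (1 - β * t) := ⟨_, rfl⟩
  obtain ⟨As, hAs⟩ : ∃ x : ℝ, x = (1 - Pbar) * (β * f) := ⟨_, rfl⟩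
  obtain ⟨Rs, hRs⟩ : ∃ x : ℝ, x = r * Pbar * (β * t) := ⟨_, rfl⟩
  have ht0 : 0 < t := lt_of_le_of_lt hf hft
  have hr0 : (0:ℝ) < r := by linarith
  have hkey : Ru ≤ Au ∨ As ≤ Rs := by
    rw [hAu, hRu, hAs, hRs]
    exact key_dichotomy r β f t Pbar hr hβ0 hβ1 hf hft ht hP0 hP1
  -- the three-option minimum
  obtain ⟨m3, hm3⟩ : ∃ x : ℝ, x = min (1 - Pbar) (min (r * Pbar) ((1 - Pbar) * (β * f) + r * Pbar * (1 - β * t))) := ⟨_, rfl⟩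
  obtain ⟨m2, hm2⟩ : ∃ x : ℝ, x = min (1 - Pbar) (r * Pbar) := ⟨_, rfl⟩
  -- non-V2V parts
  have hnB : (1 - Pbar) * xnC + r * Pbar * xnR = m2 * (1 - y) := by
    have e1 : (1 - Pbar) * xnC = m2 * xnC := by
      rcases hB.xnC_nonneg.eq_or_lt with h | h
      · rw [← h]; ring
      · rw [hm2, min_eq_left (hB.best_nC h)]
    have e2 : r * Pbar * xnR = m2 * xnR := by
      rcases hB.xnR_nonneg.eq_or_lt with h | h
      · rw [← h]; ring
      · rw [hm2, min_eq_right (hB.best_nR h)]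
    rw [e1, e2, ← mul_add, hB.sum_n]
  have hnI : (1 - Pbar) * xnC' + r * Pbar * xnR' = m2 * (1 - y) := by
    have e1 : (1 - Pbar) * xnC' = m2 * xnC' := by
      rcases hI.xnC_nonneg.eq_or_lt with h | h
      · rw [← h]; ring
      · rw [hm2, min_eq_left (hI.best_nC h)]
    have e2 : r * Pbar * xnR' = m2 * xnR' := by
      rcases hI.xnR_nonneg.eq_or_lt with h | h
      · rw [← h]; ring
      · rw [hm2, min_eq_right (hI.best_nR h)]
    rw [e1, e2, ← mul_add, hI.sum_n]
  -- non-Bayesian V2V part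
  have hvI : (1 - Pbar) * xvC + r * Pbar * xvR + ((1 - Pbar) * (β * f) + r * Pbar * (1 - β * t)) * xvT
      = m3 * y := by
    have e1 : (1 - Pbar) * xvC = m3 * xvC := by
      rcases hI.xvC_nonneg.eq_or_lt with h | h
      · rw [← h]; ring
      · rw [hm3, min_eq_left (hI.best_vC h)]
    have e2 : r * Pbar * xvR = m3 * xvR := by
      rcases hI.xvR_nonneg.eq_or_lt with h | h
      · rw [← h]; ring
      · have hle := hI.best_vR h
        have : m3 = r * Pbar := by
          rw [hm3]
          apply le_antisymm
          · exact (min_le_right _ _).trans (min_le_left _ _)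
          · exact le_min (hle.trans (min_le_left _ _))
              (le_min le_rfl (hle.trans (min_le_right _ _)))
        rw [this]
    have e3 : ((1 - Pbar) * (β * f) + r * Pbar * (1 - β * t)) * xvT = m3 * xvT := by
      rcases hI.xvT_nonneg.eq_or_lt with h | h
      · rw [← h]; ring
      · have hle := hI.best_vT h
        have : m3 = (1 - Pbar) * (β * f) + r * Pbar * (1 - β * t) := by
          rw [hm3]
          apply le_antisymm
          · exact (min_le_right _ _).trans (min_le_right _ _)
          · exact le_min (hle.trans (min_le_left _ _)) (le_min (hle.trans (min_le_right _ _)) le_rfl)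
        rw [this]
    rw [e1, e2, e3, ← mul_add, ← mul_add, hI.sum_v]
  -- Bayesian V2V part
  have hσ : sig β f t Pbar = β * (Pbar * t + (1 - Pbar) * f) := rfl
  have hx0 : 0 ≤ Pbar * t + (1 - Pbar) * f :=
    add_nonneg (mul_nonneg hP0 ht0.le) (mul_nonneg (by linarith) hf)
  have hσ0 : 0 ≤ sig β f t Pbar := by rw [hσ]; exact mul_nonneg hβ0 hx0
  have hσ1 : sig β f t Pbar ≤ 1 := by
    rw [hσ]; exact sig_le_one β f t Pbar hβ0 hβ1 hf hft ht hP0 hP1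
  have hvB : y * (cu * Au + ρu * Ru + cs * As + ρs * Rs)
      = y * (min Au Ru + min As Rs) := by
    rcases hy0.eq_or_lt with hy' | hy'
    · rw [← hy']; ring
    · have eu : cu * Au + ρu * Ru = min Au Ru := by
        rcases hσ1.eq_or_lt with hs1 | hs1
        · -- σ = 1 : degenerate, Au = Ru = 0
          have hx1 : β * (Pbar * t + (1 - Pbar) * f) = 1 := by rw [← hσ, hs1]
          obtain ⟨hb1, hb2⟩ := sig_eq_one β f t Pbar hβ0 hβ1 hf hft ht hP0 hP1 hx1
          have hAu0 : Au = 0 := by rw [hAu, hb1]; ring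
          have hRu0 : Ru = 0 := by rw [hRu, hb2]; ring
          rw [hAu0, hRu0, min_self]; ring
        · have hprod : 0 < (1 - sig β f t Pbar) * y := mul_pos (by linarith) hy'
          exact mix_eq_min Au Ru cu ρu hB.cu_nonneg hB.ρu_nonneg hB.sum_u
            (fun h => by
              have := hB.best_cu (mul_pos (mul_pos h (by linarith)) hy')
              rw [hAu, hRu]; linarith)
            (fun h => by
              have := hB.best_ρu (mul_pos (mul_pos h (by linarith)) hy')
              rw [hAu, hRu]; linarith)
      have es : cs * As + ρs * Rs = min As Rs := by
        rcases hσ0.eq_or_lt with hs0 | hs0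
        · -- σ = 0 : degenerate, As = Rs = 0
          have h0 : β * (Pbar * t + (1 - Pbar) * f) = 0 := by rw [← hσ, ← hs0]
          obtain ⟨hb1, hb2⟩ := sig_eq_zero β f t Pbar hβ0 hβ1 hf hft ht hP0 hP1 h0
          have hAs0 : As = 0 := by rw [hAs]; linarith [hb2]
          have hRs0 : Rs = 0 := by rw [hRs]; nlinarith [hb1]
          rw [hAs0, hRs0, min_self]; ring
        · have hprod : 0 < sig β f t Pbar * y := mul_pos hs0 hy'
          exact mix_eq_min As Rs cs ρs hB.cs_nonneg hB.ρs_nonneg hB.sum_s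
            (fun h => by
              have := hB.best_cs (mul_pos (mul_pos h hs0) hy')
              rw [hAs, hRs]; linarith)
            (fun h => by
              have := hB.best_ρs (mul_pos (mul_pos h hs0) hy')
              rw [hAs, hRs]; linarith)
      have hre : cu * Au + ρu * Ru + cs * As + ρs * Rs = min Au Ru + min As Rs := by
        rw [← eu, ← es]; ring
      rw [hre]
  have hminsum : min Au Ru + min As Rs = m3 := by
    rw [minsum_eq Au Ru As Rs hkey, hm3]
    congr 1
    · rw [hAu, hAs]; ring
    · congr 1
      · rw [hRu, hRs]; ring
      · rw [hAs, hRu]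
  rw [hminsum] at hvB
  have lhs_eq : socialCostB r y β f t Pbar xnC xnR cu ρu cs ρs
      = ((1 - Pbar) * xnC + r * Pbar * xnR) + y * (cu * Au + ρu * Ru + cs * As + ρs * Rs) := by
    rw [socialCostB, hAu, hRu, hAs, hRs]; try ring
  have rhs_eq : socialCostI r β f t Pbar xnC' xnR' xvC xvR xvT
      = ((1 - Pbar) * xnC' + r * Pbar * xnR')
        + ((1 - Pbar) * xvC + r * Pbar * xvR + ((1 - Pbar) * (β * f) + r * Pbar * (1 - β * t)) * xvT) := by
    rw [socialCostI]; try ring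
  rw [lhs_eq, rhs_eq, hnB, hnI, hvI, hvB]
  ring
end

section
/- Fix P̄ ∈ [0,1]. For any Bayesian equilibrium (x_n^C, x_n^R, c_u, ρ_u, c_s, ρ_s) with exogenous accident probability P̄, the social cost satisfies 𝒥_B = (1-y)·min(1-P̄, r·P̄) + y·( min((1-P̄)·β·f, r·P̄·β·t) + min((1-P̄)·(1-β·f), r·P̄·(1-β·t)) ). -/
open Set

lemma combo' (a b c d s : ℝ) (hc : 0 ≤ c) (hd : 0 ≤ d) (hsum : c + d = s)
    (h1 : 0 < c → a ≤ b) (h2 : 0 < d → b ≤ a) : c * a + d * b = s * min a b := by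
  rcases hc.lt_or_eq with hc' | hc'
  · rcases hd.lt_or_eq with hd' | hd'
    · have hab : a = b := le_antisymm (h1 hc') (h2 hd')
      rw [hab, min_self]
      linear_combination b * hsum
    · rw [min_eq_left (h1 hc')]
      linear_combination a * hsum + (b - a) * hd'.symm
  · rcases hd.lt_or_eq with hd' | hd'
    · rw [min_eq_right (h2 hd')]
      linear_combination b * hsum + (a - b) * hc'.symm
    · rw [← hc', ← hd'] at hsum
      rw [← hc', ← hd', ← hsum]
      ring

/-- closed form of the social cost at any Bayesian equilibrium with exogenous
accident probability `P̄`. -/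
theorem bayes_exo_social_cost_formula
    (r y β f t Pbar xnC xnR cu ρu cs ρs : ℝ)
    (hr : 1 < r) (hy : y ∈ Icc (0:ℝ) 1) (hβ : β ∈ Icc (0:ℝ) 1)
    (hf : 0 ≤ f) (hft : f < t) (ht : t ≤ 1) (hP : Pbar ∈ Icc (0:ℝ) 1)
    (heq : BayesEq r y β f t Pbar xnC xnR cu ρu cs ρs) :
    socialCostB r y β f t Pbar xnC xnR cu ρu cs ρs =
      (1 - y) * min (1 - Pbar) (r * Pbar) +
        y * (min ((1 - Pbar) * (β * f)) (r * Pbar * (β * t)) +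
             min ((1 - Pbar) * (1 - β * f)) (r * Pbar * (1 - β * t))) := by
  obtain ⟨hP0, hP1⟩ := hP
  obtain ⟨hy0, hy1⟩ := hy
  obtain ⟨hβ0, hβ1⟩ := hβ
  have ht0 : 0 < t := lt_of_le_of_lt hf hft
  have hβf0 : 0 ≤ β * f := mul_nonneg hβ0 hf
  have hβt0 : 0 ≤ β * t := mul_nonneg hβ0 ht0.le
  have hβf1 : β * f ≤ 1 := by nlinarith
  have hβt1 : β * t ≤ 1 := by nlinarith
  have hd1 : 1 - sig β f t Pbar =
      (1 - Pbar) * (1 - β * f) + Pbar * (1 - β * t) := by unfold sig; ring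
  have hd2 : sig β f t Pbar = (1 - Pbar) * (β * f) + Pbar * (β * t) := by
    unfold sig; ring
  have hA : 0 ≤ (1 - Pbar) * (1 - β * f) := by nlinarith
  have hB : 0 ≤ Pbar * (1 - β * t) := by nlinarith
  have hAs : 0 ≤ (1 - Pbar) * (β * f) := by nlinarith
  have hBs : 0 ≤ Pbar * (β * t) := by nlinarith
  have h1 : xnC * (1 - Pbar) + xnR * (r * Pbar) = (1 - y) * min (1 - Pbar) (r * Pbar) :=
    combo' _ _ _ _ _ heq.xnC_nonneg heq.xnR_nonneg heq.sum_n heq.best_nC heq.best_nR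
  have h2 : y * (cu * ((1 - Pbar) * (1 - β * f)) + ρu * (r * Pbar * (1 - β * t))) =
      y * min ((1 - Pbar) * (1 - β * f)) (r * Pbar * (1 - β * t)) := by
    rcases hy0.lt_or_eq with hy' | hy'
    · by_cases hσ : sig β f t Pbar = 1
      · have hA0 : (1 - Pbar) * (1 - β * f) = 0 := by linarith
        have hB0 : Pbar * (1 - β * t) = 0 := by linarith
        have hB0' : r * Pbar * (1 - β * t) = 0 := by linear_combination r * hB0
        rw [hA0, hB0', min_self]
        ring
      · have hσlt : 0 < 1 - sig β f t Pbar := by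
          rcases lt_or_eq_of_le (by linarith : sig β f t Pbar ≤ 1) with h | h
          · linarith
          · exact absurd h hσ
        have := combo' ((1 - Pbar) * (1 - β * f)) (r * Pbar * (1 - β * t)) cu ρu 1
          heq.cu_nonneg heq.ρu_nonneg heq.sum_u
          (fun hcu => heq.best_cu (mul_pos (mul_pos hcu hσlt) hy'))
          (fun hρu => heq.best_ρu (mul_pos (mul_pos hρu hσlt) hy'))
        rw [one_mul] at this
        rw [this]
    · rw [← hy']; ring
  have h3 : y * (cs * ((1 - Pbar) * (β * f)) + ρs * (r * Pbar * (β * t))) =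
      y * min ((1 - Pbar) * (β * f)) (r * Pbar * (β * t)) := by
    rcases hy0.lt_or_eq with hy' | hy'
    · by_cases hσ : sig β f t Pbar = 0
      · have hA0 : (1 - Pbar) * (β * f) = 0 := by linarith
        have hB0 : Pbar * (β * t) = 0 := by linarith
        have hB0' : r * Pbar * (β * t) = 0 := by linear_combination r * hB0
        rw [hA0, hB0', min_self]
        ring
      · have hσpos : 0 < sig β f t Pbar := by
          rcases lt_or_eq_of_le (by linarith : 0 ≤ sig β f t Pbar) with h | h
          · linarith
          · exact absurd h.symm hσ
        have := combo' ((1 - Pbar) * (β * f)) (r * Pbar * (β * t)) cs ρs 1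
          heq.cs_nonneg heq.ρs_nonneg heq.sum_s
          (fun hcs => heq.best_cs (mul_pos (mul_pos hcs hσpos) hy'))
          (fun hρs => heq.best_ρs (mul_pos (mul_pos hρs hσpos) hy'))
        rw [one_mul] at this
        rw [this]
    · rw [← hy']; ring
  unfold socialCostB
  linear_combination h1 + h2 + h3
end

section
/- Let p : [0,1] → [0,1] be continuous and strictly increasing. If (x, P) and (x', P') are two non-Bayesian endogenous equilibria for the same parameters (β, y, r, f, t, p), then P = P'. (Essential uniqueness of the equilibrium accident probability.) -/
open Set

lemma sig_mem (β f t Q : ℝ) (hβ0 : 0 ≤ β) (hβ1 : β ≤ 1) (hf : 0 ≤ f) (hft : f < t)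
    (ht : t ≤ 1) (hQ0 : 0 ≤ Q) (hQ1 : Q ≤ 1) : 0 ≤ sig β f t Q ∧ sig β f t Q ≤ 1 := by
  have ht0 : 0 ≤ t := le_trans hf hft.le
  have hin0 : 0 ≤ Q * t + (1 - Q) * f := by
    nlinarith [mul_nonneg hQ0 ht0, mul_nonneg (by linarith : (0:ℝ) ≤ 1 - Q) hf]
  have hin1 : Q * t + (1 - Q) * f ≤ t := by
    nlinarith [mul_nonneg (by linarith : (0:ℝ) ≤ 1 - Q) (by linarith : (0:ℝ) ≤ t - f)]
  constructor
  · exact mul_nonneg hβ0 hin0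
  · calc β * (Q * t + (1 - Q) * f) ≤ 1 * (Q * t + (1 - Q) * f) :=
        mul_le_mul_of_nonneg_right hβ1 hin0
      _ ≤ 1 := by linarith

lemma sig_mono (β f t Q Q' : ℝ) (hβ0 : 0 ≤ β) (hft : f ≤ t) (hQQ : Q ≤ Q') :
    sig β f t Q ≤ sig β f t Q' := by
  unfold sig
  nlinarith [mul_nonneg hβ0 (mul_nonneg (by linarith : (0:ℝ) ≤ Q' - Q)
    (by linarith : (0:ℝ) ≤ t - f))]

set_option maxHeartbeats 1000000 in
/-- Monotonicity of the effective reckless mass: if `P < P'`, the reckless mass at the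
equilibrium with probability `P'` is at most that at the equilibrium with probability `P`. -/
lemma nonbayes_reckless_mono (r y β f t : ℝ)
    (hr : 1 < r) (hy : y ∈ Icc (0:ℝ) 1) (hβ : β ∈ Icc (0:ℝ) 1)
    (hf : 0 ≤ f) (hft : f < t) (ht : t ≤ 1)
    (P xnC xnR xvC xvR xvT P' xnC' xnR' xvC' xvR' xvT' : ℝ)
    (hP : P ∈ Icc (0:ℝ) 1) (hP' : P' ∈ Icc (0:ℝ) 1)
    (heq : NonBayesEq r y β f t P xnC xnR xvC xvR xvT)
    (heq' : NonBayesEq r y β f t P' xnC' xnR' xvC' xvR' xvT')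
    (hlt : P < P') :
    xnR' + xvR' + (1 - sig β f t P') * xvT' ≤ xnR + xvR + (1 - sig β f t P) * xvT := by
  obtain ⟨hP0, hP1⟩ := hP
  obtain ⟨hP0', hP1'⟩ := hP'
  obtain ⟨hβ0, hβ1⟩ := hβ
  obtain ⟨hy0, hy1⟩ := hy
  have ht0 : 0 ≤ t := le_trans hf hft.le
  obtain ⟨hσ0, hσ1⟩ := sig_mem β f t P hβ0 hβ1 hf hft ht hP0 hP1
  obtain ⟨hσ0', hσ1'⟩ := sig_mem β f t P' hβ0 hβ1 hf hft ht hP0' hP1'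
  have hσle : sig β f t P ≤ sig β f t P' := sig_mono β f t P P' hβ0 hft.le hlt.le
  -- Step A : xnR' ≤ xnR
  have hA : xnR' ≤ xnR := by
    rcases lt_or_ge 0 xnR' with hx | hx
    · have h1 : r * P' ≤ 1 - P' := heq'.best_nR hx
      have h2 : ¬ (0 < xnC) := by
        intro hc
        have := heq.best_nC hc
        nlinarith [mul_nonneg (by linarith : (0:ℝ) ≤ r) (by linarith : (0:ℝ) ≤ P' - P)]
      have hxnC : xnC = 0 := le_antisymm (not_lt.mp h2) heq.xnC_nonneg
      have := heq.sum_n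
      have := heq'.sum_n
      have := heq'.xnC_nonneg
      linarith
    · linarith [heq.xnR_nonneg]
  -- Step B : V2V parts
  have hB : xvR' + (1 - sig β f t P') * xvT' ≤ xvR + (1 - sig β f t P) * xvT := by
    rcases lt_or_ge 0 xvR' with hxR' | hxR'
    · -- reckless V2V drivers at P'
      have h1 := heq'.best_vR hxR'
      have h1C : r * P' ≤ 1 - P' := le_trans h1 (min_le_left _ _)
      have h1T : r * P' ≤ (1 - P') * (β * f) + r * P' * (1 - β * t) :=
        le_trans h1 (min_le_right _ _)
      -- xvC = 0 at P
      have hxvC : xvC = 0 := by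
        by_contra hc
        have hc' : 0 < xvC := lt_of_le_of_ne heq.xvC_nonneg (Ne.symm hc)
        have := le_trans (heq.best_vC hc') (min_le_left _ _)
        nlinarith [mul_nonneg (by linarith : (0:ℝ) ≤ r) (by linarith : (0:ℝ) ≤ P' - P)]
      rcases eq_or_lt_of_le hβ0 with hβz | hβpos
      · -- β = 0 : trust and reckless are equivalent
        have hs : sig β f t P = 0 := by unfold sig; rw [← hβz]; ring
        have hs' : sig β f t P' = 0 := by unfold sig; rw [← hβz]; ring
        rw [hs, hs']
        have := heq.sum_v
        have := heq'.sum_v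
        have := heq'.xvC_nonneg
        linarith
      · -- β > 0
        have hkey : r * P' * t ≤ (1 - P') * f := by nlinarith
        have hfpos : 0 < f := by
          rcases lt_or_ge 0 f with h | h
          · exact h
          · exfalso
            have hf0 : f = 0 := le_antisymm h hf
            rw [hf0] at hkey
            nlinarith [mul_pos (mul_pos (by linarith : (0:ℝ) < r)
              (by linarith : (0:ℝ) < P')) (by linarith : (0:ℝ) < t)]
        have hstrict : r * P * t < (1 - P) * f := by
          nlinarith [mul_nonneg (mul_nonneg (by linarith : (0:ℝ) ≤ r) ht0)
            (by linarith : (0:ℝ) ≤ P' - P),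
            mul_pos hfpos (by linarith : (0:ℝ) < P' - P)]
        -- at P, J^R < J^T strictly, so xvT = 0
        have hxvT : xvT = 0 := by
          by_contra hc
          have hc' : 0 < xvT := lt_of_le_of_ne heq.xvT_nonneg (Ne.symm hc)
          have := le_trans (heq.best_vT hc') (min_le_right _ _)
          nlinarith [mul_pos hβpos (by linarith : (0:ℝ) < (1 - P) * f - r * P * t)]
        have hsum := heq.sum_v
        have hsum' := heq'.sum_v
        rw [hxvT]
        nlinarith [heq'.xvC_nonneg, heq'.xvT_nonneg,
          mul_nonneg hσ0' heq'.xvT_nonneg]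
    · have hxR'0 : xvR' = 0 := le_antisymm hxR' heq'.xvR_nonneg
      rcases lt_or_ge 0 xvT' with hxT' | hxT'
      · -- trusting V2V drivers at P'
        have h1 := heq'.best_vT hxT'
        have h1C : (1 - P') * (β * f) + r * P' * (1 - β * t) ≤ 1 - P' :=
          le_trans h1 (min_le_left _ _)
        have hbt : β * t ≤ 1 := by nlinarith
        have hbf : β * f < 1 := by nlinarith
        -- at P, J^C > J^T strictly, so xvC = 0
        have hxvC : xvC = 0 := by
          by_contra hc
          have hc' : 0 < xvC := lt_of_le_of_ne heq.xvC_nonneg (Ne.symm hc)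
          have := le_trans (heq.best_vC hc') (min_le_right _ _)
          nlinarith [mul_nonneg (mul_nonneg (by linarith : (0:ℝ) ≤ r)
            (by linarith : (0:ℝ) ≤ 1 - β * t)) (by linarith : (0:ℝ) ≤ P' - P),
            mul_pos (by linarith : (0:ℝ) < 1 - β * f) (by linarith : (0:ℝ) < P' - P)]
        have hsum := heq.sum_v
        have hT'y : xvT' ≤ y := by
          have := heq'.xvC_nonneg
          have := heq'.sum_v
          linarith
        have hw : (0:ℝ) ≤ 1 - sig β f t P' := by linarith
        have h2 : (1 - sig β f t P') * xvT' ≤ (1 - sig β f t P') * y :=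
          mul_le_mul_of_nonneg_left hT'y hw
        have hyv : y = xvR + xvT := by linarith
        rw [hxR'0]
        nlinarith [h2, mul_nonneg hσ0' heq.xvR_nonneg,
          mul_nonneg (by linarith : (0:ℝ) ≤ sig β f t P' - sig β f t P) heq.xvT_nonneg]
      · have hxT'0 : xvT' = 0 := le_antisymm hxT' heq'.xvT_nonneg
        rw [hxR'0, hxT'0]
        nlinarith [heq.xvR_nonneg,
          mul_nonneg (by linarith : (0:ℝ) ≤ 1 - sig β f t P) heq.xvT_nonneg]
  linarith

set_option maxHeartbeats 1000000 in
/-- essential uniqueness of the accident probability over non-Bayesian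
endogenous equilibria. -/
theorem nonbayes_endo_prob_unique (r y β f t : ℝ) (p : ℝ → ℝ)
    (hr : 1 < r) (hy : y ∈ Icc (0:ℝ) 1) (hβ : β ∈ Icc (0:ℝ) 1)
    (hf : 0 ≤ f) (hft : f < t) (ht : t ≤ 1)
    (hp_cont : ContinuousOn p (Icc (0:ℝ) 1)) (hp_mono : StrictMonoOn p (Icc (0:ℝ) 1))
    (hp_maps : MapsTo p (Icc (0:ℝ) 1) (Icc (0:ℝ) 1))
    (P xnC xnR xvC xvR xvT P' xnC' xnR' xvC' xvR' xvT' : ℝ)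
    (hP : P ∈ Icc (0:ℝ) 1) (hP' : P' ∈ Icc (0:ℝ) 1)
    (heq : NonBayesEq r y β f t P xnC xnR xvC xvR xvT)
    (hendo : P = p (xnR + xvR + (1 - sig β f t P) * xvT))
    (heq' : NonBayesEq r y β f t P' xnC' xnR' xvC' xvR' xvT')
    (hendo' : P' = p (xnR' + xvR' + (1 - sig β f t P') * xvT')) :
    P = P' := by
  obtain ⟨hβ0, hβ1⟩ := hβ
  obtain ⟨hy0, hy1⟩ := hy
  have hσ : ∀ Q xnc xnr xvc xvr xvt, Q ∈ Icc (0:ℝ) 1 →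
      NonBayesEq r y β f t Q xnc xnr xvc xvr xvt →
      xnr + xvr + (1 - sig β f t Q) * xvt ∈ Icc (0:ℝ) 1 := by
    intro Q xnc xnr xvc xvr xvt hQ e
    obtain ⟨hQ0, hQ1⟩ := hQ
    obtain ⟨hs0, hs1⟩ := sig_mem β f t Q hβ0 hβ1 hf hft ht hQ0 hQ1
    constructor
    · nlinarith [e.xnR_nonneg, e.xvR_nonneg, e.xvT_nonneg,
        mul_nonneg (by linarith : (0:ℝ) ≤ 1 - sig β f t Q) e.xvT_nonneg]
    · nlinarith [e.xnC_nonneg, e.xvC_nonneg, e.xvT_nonneg, e.sum_n, e.sum_v,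
        mul_nonneg hs0 e.xvT_nonneg]
  have hm := hσ P xnC xnR xvC xvR xvT hP heq
  have hm' := hσ P' xnC' xnR' xvC' xvR' xvT' hP' heq'
  rcases lt_trichotomy P P' with h | h | h
  · exfalso
    have hle := nonbayes_reckless_mono r y β f t hr ⟨hy0, hy1⟩ ⟨hβ0, hβ1⟩ hf hft ht
      P xnC xnR xvC xvR xvT P' xnC' xnR' xvC' xvR' xvT' hP hP' heq heq' h
    have : P' ≤ P := by
      rw [hendo, hendo']
      exact (hp_mono.monotoneOn) hm' hm hle
    linarith
  · exact h
  · exfalso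
    have hle := nonbayes_reckless_mono r y β f t hr ⟨hy0, hy1⟩ ⟨hβ0, hβ1⟩ hf hft ht
      P' xnC' xnR' xvC' xvR' xvT' P xnC xnR xvC xvR xvT hP' hP heq' heq h
    have : P ≤ P' := by
      rw [hendo, hendo']
      exact (hp_mono.monotoneOn) hm hm' hle
    linarith
end

section
/- Let p : [0,1] → [0,1] be continuous and strictly increasing. If (x, P) and (x', P') are two non-Bayesian endogenous equilibria for the same parameters (β, y, r, f, t, p), then their social costs are equal: 𝒥_I(x) = 𝒥_I(x'). -/
open Set

set_option maxHeartbeats 1000000 in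
lemma aux_shrink (σ x : ℝ) (h0 : 0 ≤ σ) (hx : 0 ≤ x) : (1 - σ) * x ≤ x := by nlinarith

lemma aux_cross (σ σ' x y : ℝ) (h1 : σ ≤ σ') (h2 : σ' ≤ 1) (hxy : x ≤ y) (hy : 0 ≤ y) :
    (1 - σ') * x ≤ (1 - σ) * y := by
  nlinarith [mul_nonneg (show (0:ℝ) ≤ 1 - σ' by linarith) (show (0:ℝ) ≤ y - x by linarith),
    mul_nonneg (show (0:ℝ) ≤ σ' - σ by linarith) hy]

lemma min3_helper (c d e a b g s : ℝ) (ha : 0 ≤ a) (hb : 0 ≤ b) (hg : 0 ≤ g)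
    (hs : a + b + g = s)
    (hA : 0 < a → c ≤ min d e) (hB : 0 < b → d ≤ min c e) (hC : 0 < g → e ≤ min c d) :
    c * a + d * b + e * g = min c (min d e) * s := by
  have hca : c * a = min c (min d e) * a := by
    rcases ha.eq_or_lt with h | h
    · rw [← h]; ring
    · rw [min_eq_left (hA h)]
  have hdb : d * b = min c (min d e) * b := by
    rcases hb.eq_or_lt with h | h
    · rw [← h]; ring
    · have h1 := hB h
      have hdc : d ≤ c := le_trans h1 (min_le_left _ _)
      have hde : d ≤ e := le_trans h1 (min_le_right _ _)
      rw [min_eq_left hde, min_eq_right hdc]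
  have heg : e * g = min c (min d e) * g := by
    rcases hg.eq_or_lt with h | h
    · rw [← h]; ring
    · have h1 := hC h
      have hec : e ≤ c := le_trans h1 (min_le_left _ _)
      have hed : e ≤ d := le_trans h1 (min_le_right _ _)
      rw [min_eq_right hed, min_eq_right hec]
  rw [hca, hdb, heg, ← hs]; ring

lemma sig_bounds (β f t P : ℝ) (hβ0 : 0 ≤ β) (hβ1 : β ≤ 1) (hf : 0 ≤ f) (hft : f < t)
    (ht : t ≤ 1) (hP0 : 0 ≤ P) (hP1 : P ≤ 1) : 0 ≤ sig β f t P ∧ sig β f t P ≤ 1 := by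
  have ht0 : 0 < t := lt_of_le_of_lt hf hft
  have hS0 : 0 ≤ P * t + (1 - P) * f := by
    nlinarith [mul_nonneg hP0 ht0.le, mul_nonneg (show (0:ℝ) ≤ 1 - P by linarith) hf]
  have hS1 : P * t + (1 - P) * f ≤ 1 := by
    nlinarith [mul_nonneg hP0 (show (0:ℝ) ≤ 1 - t by linarith),
      mul_nonneg (show (0:ℝ) ≤ 1 - P by linarith) (show (0:ℝ) ≤ 1 - f by linarith)]
  constructor
  · exact mul_nonneg hβ0 hS0
  · unfold sig; nlinarith [mul_nonneg hβ0 hS0]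

/-- The social cost of a non-Bayesian equilibrium depends only on `P` (and the parameters). -/
lemma cost_formula (r y β f t P xnC xnR xvC xvR xvT : ℝ)
    (heq : NonBayesEq r y β f t P xnC xnR xvC xvR xvT) :
    socialCostI r β f t P xnC xnR xvC xvR xvT =
      min (1 - P) (r * P) * (1 - y) +
        min (1 - P) (min (r * P) ((1 - P) * (β * f) + r * P * (1 - β * t))) * y := by
  have h2 := min3_helper (1 - P) (r * P) (r * P) xnC xnR 0 (1 - y)
    heq.xnC_nonneg heq.xnR_nonneg le_rfl (by rw [add_zero]; exact heq.sum_n)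
    (fun h => le_min (heq.best_nC h) (heq.best_nC h))
    (fun h => le_min (heq.best_nR h) le_rfl)
    (fun h => absurd h (lt_irrefl 0))
  rw [min_self] at h2
  have h3 := min3_helper (1 - P) (r * P) ((1 - P) * (β * f) + r * P * (1 - β * t))
    xvC xvR xvT y heq.xvC_nonneg heq.xvR_nonneg heq.xvT_nonneg heq.sum_v
    heq.best_vC heq.best_vR heq.best_vT
  unfold socialCostI
  linear_combination h2 + h3

set_option maxHeartbeats 1000000 in
/-- Monotonicity: a higher equilibrium accident probability forces a (weakly) smaller
effective reckless mass. -/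
lemma X_antitone (r y β f t P P' xnC xnR xvC xvR xvT xnC' xnR' xvC' xvR' xvT' : ℝ)
    (hr : 1 < r) (hy0 : 0 ≤ y) (hβ0 : 0 ≤ β) (hβ1 : β ≤ 1)
    (hf : 0 ≤ f) (hft : f < t) (ht : t ≤ 1)
    (hP : P ∈ Icc (0:ℝ) 1) (hP' : P' ∈ Icc (0:ℝ) 1)
    (heq : NonBayesEq r y β f t P xnC xnR xvC xvR xvT)
    (heq' : NonBayesEq r y β f t P' xnC' xnR' xvC' xvR' xvT')
    (hlt : P < P') :
    xnR' + xvR' + (1 - sig β f t P') * xvT' ≤ xnR + xvR + (1 - sig β f t P) * xvT := by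
  obtain ⟨hP0, hP1⟩ := hP
  obtain ⟨hP0', hP1'⟩ := hP'
  have ht0 : 0 < t := lt_of_le_of_lt hf hft
  have hr0 : 0 < r := by linarith
  obtain ⟨hs0, hs1⟩ := sig_bounds β f t P hβ0 hβ1 hf hft ht hP0 hP1
  obtain ⟨hs0', hs1'⟩ := sig_bounds β f t P' hβ0 hβ1 hf hft ht hP0' hP1'
  have hsmono : sig β f t P ≤ sig β f t P' := by
    unfold sig
    nlinarith [mul_nonneg hβ0 (mul_nonneg (show (0:ℝ) ≤ P' - P by linarith)
      (show (0:ℝ) ≤ t - f by linarith))]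
  have hxvT'le : xvT' ≤ y := by
    have := heq'.sum_v
    linarith [heq'.xvC_nonneg, heq'.xvR_nonneg]
  by_cases h1 : r * P' ≤ 1 - P'
  · -- Case 1: at P', C is not strictly better than R; hence at P, R is strictly better
    have hPlt : r * P < 1 - P := by nlinarith
    have hxnC : xnC = 0 := by
      by_contra hne
      exact absurd (heq.best_nC (heq.xnC_nonneg.lt_of_ne (Ne.symm hne))) (by linarith)
    have hxvC : xvC = 0 := by
      by_contra hne
      have h := le_trans (heq.best_vC (heq.xvC_nonneg.lt_of_ne (Ne.symm hne)))
        (min_le_left _ _)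
      linarith
    have hsum : xvR + xvT = y := by have := heq.sum_v; linarith
    have hxnR : xnR = 1 - y := by have := heq.sum_n; linarith
    have hxnR' : xnR' ≤ 1 - y := by have := heq'.sum_n; linarith [heq'.xnC_nonneg]
    by_cases hvR' : 0 < xvR'
    · -- xvR' > 0 : at P', R is weakly better than T
      have hBR := le_trans (heq'.best_vR hvR') (min_le_right _ _)
      by_cases hvT : 0 < xvT
      · -- xvT > 0 : at P, T is weakly better than R; forces β = 0
        have hBT := le_trans (heq.best_vT hvT) (min_le_right _ _)
        have hβz : β = 0 := by
          have hble : β ≤ 0 := by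
            nlinarith [mul_pos (show (0:ℝ) < P' - P by linarith)
              (show (0:ℝ) < f + r * t by nlinarith)]
          linarith
        have hsz : sig β f t P = 0 := by simp [sig, hβz]
        have hsz' : sig β f t P' = 0 := by simp [sig, hβz]
        rw [hsz, hsz']
        have := heq'.sum_v
        linarith [heq'.xvC_nonneg]
      · -- xvT = 0 : whole population is reckless at P
        have hvT0 : xvT = 0 := le_antisymm (not_lt.1 hvT) heq.xvT_nonneg
        have hT' : (1 - sig β f t P') * xvT' ≤ xvT' :=
          aux_shrink _ _ hs0' heq'.xvT_nonneg
        have hvRy : xvR = y := by linarith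
        rw [hxnR, hvT0, hvRy]
        have := heq'.sum_v
        linarith [heq'.xvC_nonneg]
    · -- xvR' = 0
      have hvR0 : xvR' = 0 := le_antisymm (not_lt.1 hvR') heq'.xvR_nonneg
      have hT'le : (1 - sig β f t P') * xvT' ≤ (1 - sig β f t P) * y :=
        aux_cross _ _ _ _ hsmono hs1' hxvT'le hy0
      have hexp : (1 - sig β f t P) * y
          = (1 - sig β f t P) * xvR + (1 - sig β f t P) * xvT := by
        rw [← hsum]; ring
      have hRge : (1 - sig β f t P) * y ≤ xvR + (1 - sig β f t P) * xvT := by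
        rw [hexp]
        have := aux_shrink (sig β f t P) xvR hs0 heq.xvR_nonneg
        linarith
      rw [hvR0]
      linarith
  · -- Case 2: at P', C is strictly better than R
    push_neg at h1
    have hxnR' : xnR' = 0 := by
      by_contra hne
      exact absurd (heq'.best_nR (heq'.xnR_nonneg.lt_of_ne (Ne.symm hne))) (by linarith)
    have hxvR' : xvR' = 0 := by
      by_contra hne
      have h := le_trans (heq'.best_vR (heq'.xvR_nonneg.lt_of_ne (Ne.symm hne)))
        (min_le_left _ _)
      linarith
    by_cases hvT' : 0 < xvT'
    · have hT'C := le_trans (heq'.best_vT hvT') (min_le_left _ _)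
      have hxvC : xvC = 0 := by
        by_contra hne
        have hC := le_trans (heq.best_vC (heq.xvC_nonneg.lt_of_ne (Ne.symm hne)))
          (min_le_right _ _)
        have hbf : β * f ≤ f := mul_le_of_le_one_left hf hβ1
        have hbt : β * t ≤ t := mul_le_of_le_one_left ht0.le hβ1
        nlinarith [mul_pos (show (0:ℝ) < P' - P by linarith)
          (show (0:ℝ) < 1 - β * f by linarith),
          mul_nonneg (show (0:ℝ) ≤ P' - P by linarith)
          (mul_nonneg hr0.le (show (0:ℝ) ≤ 1 - β * t by linarith))]
      have hsum : xvR + xvT = y := by have := heq.sum_v; linarith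
      have hT'le : (1 - sig β f t P') * xvT' ≤ (1 - sig β f t P) * y :=
        aux_cross _ _ _ _ hsmono hs1' hxvT'le hy0
      have hexp : (1 - sig β f t P) * y
          = (1 - sig β f t P) * xvR + (1 - sig β f t P) * xvT := by
        rw [← hsum]; ring
      have hRge : (1 - sig β f t P) * y ≤ xvR + (1 - sig β f t P) * xvT := by
        rw [hexp]
        have := aux_shrink (sig β f t P) xvR hs0 heq.xvR_nonneg
        linarith
      rw [hxnR', hxvR']
      linarith [heq.xnR_nonneg]
    · have hvT0 : xvT' = 0 := le_antisymm (not_lt.1 hvT') heq'.xvT_nonneg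
      rw [hxnR', hxvR', hvT0]
      have hTnn : 0 ≤ (1 - sig β f t P) * xvT :=
        mul_nonneg (by linarith) heq.xvT_nonneg
      nlinarith [heq.xnR_nonneg, heq.xvR_nonneg]

set_option maxHeartbeats 1000000 in
/-- any two non-Bayesian endogenous equilibria for the same parameters have
equal social cost. -/
theorem nonbayes_endo_social_cost_unique (r y β f t : ℝ) (p : ℝ → ℝ)
    (hr : 1 < r) (hy : y ∈ Icc (0:ℝ) 1) (hβ : β ∈ Icc (0:ℝ) 1)
    (hf : 0 ≤ f) (hft : f < t) (ht : t ≤ 1)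
    (hp_cont : ContinuousOn p (Icc (0:ℝ) 1)) (hp_mono : StrictMonoOn p (Icc (0:ℝ) 1))
    (hp_maps : MapsTo p (Icc (0:ℝ) 1) (Icc (0:ℝ) 1))
    (P xnC xnR xvC xvR xvT P' xnC' xnR' xvC' xvR' xvT' : ℝ)
    (hP : P ∈ Icc (0:ℝ) 1) (hP' : P' ∈ Icc (0:ℝ) 1)
    (heq : NonBayesEq r y β f t P xnC xnR xvC xvR xvT)
    (hendo : P = p (xnR + xvR + (1 - sig β f t P) * xvT))
    (heq' : NonBayesEq r y β f t P' xnC' xnR' xvC' xvR' xvT')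
    (hendo' : P' = p (xnR' + xvR' + (1 - sig β f t P') * xvT')) :
    socialCostI r β f t P xnC xnR xvC xvR xvT =
      socialCostI r β f t P' xnC' xnR' xvC' xvR' xvT' := by
  obtain ⟨hy0, hy1⟩ := hy
  obtain ⟨hβ0, hβ1⟩ := hβ
  obtain ⟨hs0, hs1⟩ := sig_bounds β f t P hβ0 hβ1 hf hft ht hP.1 hP.2
  obtain ⟨hs0', hs1'⟩ := sig_bounds β f t P' hβ0 hβ1 hf hft ht hP'.1 hP'.2
  have hXmem : xnR + xvR + (1 - sig β f t P) * xvT ∈ Icc (0:ℝ) 1 := by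
    constructor
    · have := mul_nonneg (show (0:ℝ) ≤ 1 - sig β f t P by linarith) heq.xvT_nonneg
      linarith [heq.xnR_nonneg, heq.xvR_nonneg]
    · have h1 : (1 - sig β f t P) * xvT ≤ xvT :=
        aux_shrink _ _ hs0 heq.xvT_nonneg
      have := heq.sum_n
      have := heq.sum_v
      linarith [heq.xnC_nonneg, heq.xvC_nonneg]
  have hXmem' : xnR' + xvR' + (1 - sig β f t P') * xvT' ∈ Icc (0:ℝ) 1 := by
    constructor
    · have := mul_nonneg (show (0:ℝ) ≤ 1 - sig β f t P' by linarith) heq'.xvT_nonneg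
      linarith [heq'.xnR_nonneg, heq'.xvR_nonneg]
    · have h1 : (1 - sig β f t P') * xvT' ≤ xvT' :=
        aux_shrink _ _ hs0' heq'.xvT_nonneg
      have := heq'.sum_n
      have := heq'.sum_v
      linarith [heq'.xnC_nonneg, heq'.xvC_nonneg]
  rcases lt_trichotomy P P' with h | h | h
  · exfalso
    have hXle := X_antitone r y β f t P P' xnC xnR xvC xvR xvT xnC' xnR' xvC' xvR' xvT'
      hr hy0 hβ0 hβ1 hf hft ht hP hP' heq heq' h
    have hmono := (hp_mono.monotoneOn) hXmem' hXmem hXle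
    rw [← hendo, ← hendo'] at hmono
    linarith
  · rw [h] at heq hendo ⊢
    rw [cost_formula r y β f t P' xnC xnR xvC xvR xvT heq,
      cost_formula r y β f t P' xnC' xnR' xvC' xvR' xvT' heq']
  · exfalso
    have hXle := X_antitone r y β f t P' P xnC' xnR' xvC' xvR' xvT' xnC xnR xvC xvR xvT
      hr hy0 hβ0 hβ1 hf hft ht hP' hP heq' heq h
    have hmono := (hp_mono.monotoneOn) hXmem hXmem' hXle
    rw [← hendo, ← hendo'] at hmono
    linarith
end

section
/- For every continuous strictly increasing function p : [0,1] → [0,1] and all parameters r > 1, y ∈ [0,1], β ∈ [0,1], and 0 ≤ f < t ≤ 1, there exists a non-Bayesian endogenous equilibrium, i.e., a tuple (x_n^C, x_n^R, x_v^C, x_v^R, x_v^T) together with P ∈ [0,1] satisfying all the equilibrium conditions. -/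
open Set

/-!
Against the accident probability `P`, each driver's best response changes only at the
thresholds `Pvs ≤ Pn ≤ Pvu`, so the reckless masses `m` compatible with equilibrium form a
nonincreasing staircase in the `(P, m)`-plane: a curve over each interval between thresholds,
and a vertical segment at each threshold, along which drivers move from one best response to
the other. The graph `P = p m` starts on or above the staircase at `m = 1` (as `0 ≤ p 1`) and
ends on or below it at `m = 0` (as `p 0 ≤ 1`); the intermediate value theorem, applied piece by
piece, locates a crossing, which is an endogenous equilibrium.
-/

theorem exists_eq_or_lt_of_le {u v : ℝ → ℝ} {a b : ℝ} (hab : a ≤ b)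
    (hu : ContinuousOn u (Icc a b)) (hv : ContinuousOn v (Icc a b)) (ha : u a ≤ v a) :
    (∃ x ∈ Icc a b, u x = v x) ∨ u b < v b :=
  (lt_or_ge (u b) (v b)).symm.imp
    (isPreconnected_Icc.intermediate_value₂ (left_mem_Icc.2 hab) (right_mem_Icc.2 hab) hu hv ha)
    id

section Costs

variable {r β f t P : ℝ}

theorem reckless_le_careful_iff (hr : -1 < r) : r * P ≤ 1 - P ↔ P ≤ Pn r := by
  rw [Pn, le_div_iff₀ (by linarith)]
  constructor <;> intro <;> linarith

theorem careful_le_reckless_iff (hr : -1 < r) : 1 - P ≤ r * P ↔ Pn r ≤ P := by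
  rw [Pn, div_le_iff₀ (by linarith)]
  constructor <;> intro <;> linarith

theorem trust_le_careful_iff (hD : 0 < 1 + r * (1 - β * t) - β * f) :
    (1 - P) * (β * f) + r * P * (1 - β * t) ≤ 1 - P ↔ P ≤ Pvu r β f t := by
  rw [Pvu, le_div_iff₀ hD]
  constructor <;> intro <;> linarith

theorem careful_le_trust_iff (hD : 0 < 1 + r * (1 - β * t) - β * f) :
    1 - P ≤ (1 - P) * (β * f) + r * P * (1 - β * t) ↔ Pvu r β f t ≤ P := by
  rw [Pvu, div_le_iff₀ hD]
  constructor <;> intro <;> linarith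

theorem reckless_le_trust (hβ : 0 ≤ β) (hD : 0 < r * t + f) (hP : P ≤ Pvs r f t) :
    r * P ≤ (1 - P) * (β * f) + r * P * (1 - β * t) := by
  rw [Pvs, le_div_iff₀ hD] at hP
  nlinarith [mul_le_mul_of_nonneg_left hP hβ]

theorem trust_le_reckless (hβ : 0 ≤ β) (hD : 0 < r * t + f) (hP : Pvs r f t ≤ P) :
    (1 - P) * (β * f) + r * P * (1 - β * t) ≤ r * P := by
  rw [Pvs, div_le_iff₀ hD] at hP
  nlinarith [mul_le_mul_of_nonneg_left hP hβ]

end Costs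

@[fun_prop]
theorem continuous_sig (β f t : ℝ) : Continuous (sig β f t) := by
  unfold sig
  fun_prop

theorem sig_mem_Icc {β f t P : ℝ} (hβ : β ∈ Icc (0:ℝ) 1) (hf : 0 ≤ f) (hft : f ≤ t)
    (ht : t ≤ 1) (hP : P ∈ Icc (0:ℝ) 1) : sig β f t P ∈ Icc (0:ℝ) 1 := by
  obtain ⟨hP0, hP1⟩ := hP
  exact unitInterval.mul_mem hβ ⟨by nlinarith, by nlinarith⟩

/-- `m` is the reckless mass `x_n^R + x_v^R + (1 - σ(P)) x_v^T` of some non-Bayesian equilibrium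
at accident probability `P`; a trusting driver is reckless exactly when no signal is shown. -/
def IsEqRecklessMass (r y β f t P m : ℝ) : Prop :=
  ∃ xnC xnR xvC xvR xvT, NonBayesEq r y β f t P xnC xnR xvC xvR xvT ∧
    m = xnR + xvR + (1 - sig β f t P) * xvT

theorem IsEqRecklessMass.mem_Icc {r y β f t P m : ℝ} (hm : IsEqRecklessMass r y β f t P m)
    (hσ : sig β f t P ∈ Icc (0:ℝ) 1) : m ∈ Icc (0:ℝ) 1 := by
  obtain ⟨xnC, xnR, xvC, xvR, xvT, hE, rfl⟩ := hm
  have := hE.xnC_nonneg; have := hE.xnR_nonneg; have := hE.xvC_nonneg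
  have := hE.xvR_nonneg; have := hE.sum_n; have := hE.sum_v
  have := mul_nonneg hσ.1 hE.xvT_nonneg
  have := mul_nonneg (sub_nonneg.2 hσ.2) hE.xvT_nonneg
  constructor <;> linarith

def ExistsEndoEq (r y β f t : ℝ) (p : ℝ → ℝ) : Prop :=
  ∃ P ∈ Icc (0:ℝ) 1, ∃ m, IsEqRecklessMass r y β f t P m ∧ P = p m

structure AdmissibleParams (r β f t : ℝ) : Prop where
  r_pos : 0 < r
  β_mem : β ∈ Icc (0:ℝ) 1
  f_nonneg : 0 ≤ f
  f_lt_t : f < t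
  t_le_one : t ≤ 1

namespace AdmissibleParams

variable {r y β f t P T : ℝ} {p : ℝ → ℝ}

theorem rt_add_f_pos (h : AdmissibleParams r β f t) : 0 < r * t + f := by
  have := h.r_pos; have := h.f_nonneg; have := h.f_lt_t
  nlinarith

theorem Pvu_denom_pos (h : AdmissibleParams r β f t) : 0 < 1 + r * (1 - β * t) - β * f := by
  obtain ⟨hr, ⟨hβ0, hβ1⟩, hf, hft, ht⟩ := h
  nlinarith [mul_nonneg hr.le (by nlinarith : 0 ≤ 1 - β * t)]

theorem Pvs_nonneg (h : AdmissibleParams r β f t) : 0 ≤ Pvs r f t :=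
  div_nonneg h.f_nonneg h.rt_add_f_pos.le

theorem Pvs_le_Pn (h : AdmissibleParams r β f t) : Pvs r f t ≤ Pn r := by
  have := h.r_pos
  rw [Pvs, Pn, div_le_div_iff₀ h.rt_add_f_pos (by linarith)]
  nlinarith [mul_le_mul_of_nonneg_left h.f_lt_t.le this.le]

theorem Pn_le_Pvu (h : AdmissibleParams r β f t) : Pn r ≤ Pvu r β f t := by
  have := h.r_pos
  rw [Pn, Pvu, div_le_div_iff₀ (by linarith) h.Pvu_denom_pos]
  nlinarith [mul_le_mul_of_nonneg_left h.f_lt_t.le (mul_nonneg this.le h.β_mem.1)]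

theorem Pvu_le_one (h : AdmissibleParams r β f t) : Pvu r β f t ≤ 1 := by
  rw [Pvu, div_le_one h.Pvu_denom_pos]
  obtain ⟨hr, ⟨hβ0, hβ1⟩, -, -, ht⟩ := h
  nlinarith [mul_nonneg hr.le (by nlinarith : 0 ≤ 1 - β * t)]

theorem Pvs_mem_Icc (h : AdmissibleParams r β f t) : Pvs r f t ∈ Icc (0:ℝ) 1 :=
  ⟨h.Pvs_nonneg, h.Pvs_le_Pn.trans (h.Pn_le_Pvu.trans h.Pvu_le_one)⟩

theorem Pn_mem_Icc (h : AdmissibleParams r β f t) : Pn r ∈ Icc (0:ℝ) 1 :=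
  ⟨h.Pvs_nonneg.trans h.Pvs_le_Pn, h.Pn_le_Pvu.trans h.Pvu_le_one⟩

theorem Pvu_mem_Icc (h : AdmissibleParams r β f t) : Pvu r β f t ∈ Icc (0:ℝ) 1 :=
  ⟨h.Pvs_nonneg.trans (h.Pvs_le_Pn.trans h.Pn_le_Pvu), h.Pvu_le_one⟩

theorem nonBayesEq_of_thresholds (h : AdmissibleParams r β f t) {xnC xnR xvC xvR xvT : ℝ}
    (hnC : 0 ≤ xnC) (hnR : 0 ≤ xnR) (hvC : 0 ≤ xvC) (hvR : 0 ≤ xvR) (hvT : 0 ≤ xvT)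
    (sum_n : xnC + xnR = 1 - y) (sum_v : xvC + xvR + xvT = y)
    (best_nC : 0 < xnC → Pn r ≤ P) (best_nR : 0 < xnR → P ≤ Pn r)
    (best_vC : 0 < xvC → Pvu r β f t ≤ P) (best_vR : 0 < xvR → P ≤ Pvs r f t)
    (best_vT : 0 < xvT → P ∈ Icc (Pvs r f t) (Pvu r β f t)) :
    NonBayesEq r y β f t P xnC xnR xvC xvR xvT := by
  have hr : -1 < r := by linarith [h.r_pos]
  refine ⟨hnC, hnR, hvC, hvR, hvT, sum_n, sum_v, fun hx => ?_, fun hx => ?_, fun hx => ?_,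
    fun hx => ?_, fun hx => ?_⟩
  · exact (careful_le_reckless_iff hr).2 (best_nC hx)
  · exact (reckless_le_careful_iff hr).2 (best_nR hx)
  · have hP := best_vC hx
    exact le_min ((careful_le_reckless_iff hr).2 (h.Pn_le_Pvu.trans hP))
      ((careful_le_trust_iff h.Pvu_denom_pos).2 hP)
  · have hP := best_vR hx
    exact le_min ((reckless_le_careful_iff hr).2 (hP.trans h.Pvs_le_Pn))
      (reckless_le_trust h.β_mem.1 h.rt_add_f_pos hP)
  · obtain ⟨hQ, hU⟩ := best_vT hx
    exact le_min ((trust_le_careful_iff h.Pvu_denom_pos).2 hU)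
      (trust_le_reckless h.β_mem.1 h.rt_add_f_pos hQ)

theorem isEqRecklessMass_one (h : AdmissibleParams r β f t) (hy : y ∈ Icc (0:ℝ) 1)
    (hP : P ≤ Pvs r f t) : IsEqRecklessMass r y β f t P 1 :=
  ⟨0, 1 - y, 0, y, 0, h.nonBayesEq_of_thresholds le_rfl (sub_nonneg.2 hy.2) le_rfl hy.1 le_rfl
    (by ring) (by ring) (·.false.elim) (fun _ => hP.trans h.Pvs_le_Pn) (·.false.elim)
    (fun _ => hP) (·.false.elim), by ring⟩

/- On the vertical segment at a threshold, `T` is the mass of drivers that have already switched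
to the best response of the next interval. -/
theorem isEqRecklessMass_Pvs (h : AdmissibleParams r β f t) (hy : y ≤ 1) (hT : T ∈ Icc 0 y) :
    IsEqRecklessMass r y β f t (Pvs r f t) (1 - sig β f t (Pvs r f t) * T) :=
  ⟨0, 1 - y, 0, y - T, T, h.nonBayesEq_of_thresholds le_rfl (sub_nonneg.2 hy) le_rfl
    (sub_nonneg.2 hT.2) hT.1 (by ring) (by ring) (·.false.elim) (fun _ => h.Pvs_le_Pn)
    (·.false.elim) (fun _ => le_rfl) (fun _ => ⟨le_rfl, h.Pvs_le_Pn.trans h.Pn_le_Pvu⟩),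
    by ring⟩

theorem isEqRecklessMass_of_mem_Icc_Pvs_Pn (h : AdmissibleParams r β f t)
    (hy : y ∈ Icc (0:ℝ) 1) (hP : P ∈ Icc (Pvs r f t) (Pn r)) :
    IsEqRecklessMass r y β f t P (1 - sig β f t P * y) :=
  ⟨0, 1 - y, 0, 0, y, h.nonBayesEq_of_thresholds le_rfl (sub_nonneg.2 hy.2) le_rfl le_rfl hy.1
    (by ring) (by ring) (·.false.elim) (fun _ => hP.2) (·.false.elim) (·.false.elim)
    (fun _ => ⟨hP.1, hP.2.trans h.Pn_le_Pvu⟩), by ring⟩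

theorem isEqRecklessMass_Pn (h : AdmissibleParams r β f t) (hy : 0 ≤ y)
    (hT : T ∈ Icc 0 (1 - y)) :
    IsEqRecklessMass r y β f t (Pn r) (1 - T - sig β f t (Pn r) * y) :=
  ⟨T, 1 - y - T, 0, 0, y, h.nonBayesEq_of_thresholds hT.1 (sub_nonneg.2 hT.2) le_rfl le_rfl hy
    (by ring) (by ring) (fun _ => le_rfl) (fun _ => le_rfl) (·.false.elim) (·.false.elim)
    (fun _ => ⟨h.Pvs_le_Pn, h.Pn_le_Pvu⟩), by ring⟩

theorem isEqRecklessMass_of_mem_Icc_Pn_Pvu (h : AdmissibleParams r β f t)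
    (hy : y ∈ Icc (0:ℝ) 1) (hP : P ∈ Icc (Pn r) (Pvu r β f t)) :
    IsEqRecklessMass r y β f t P ((1 - sig β f t P) * y) :=
  ⟨1 - y, 0, 0, 0, y, h.nonBayesEq_of_thresholds (sub_nonneg.2 hy.2) le_rfl le_rfl le_rfl hy.1
    (by ring) (by ring) (fun _ => hP.1) (·.false.elim) (·.false.elim) (·.false.elim)
    (fun _ => ⟨h.Pvs_le_Pn.trans hP.1, hP.2⟩), by ring⟩

theorem isEqRecklessMass_Pvu (h : AdmissibleParams r β f t) (hy : y ≤ 1) (hT : T ∈ Icc 0 y) :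
    IsEqRecklessMass r y β f t (Pvu r β f t) ((1 - sig β f t (Pvu r β f t)) * (y - T)) :=
  ⟨1 - y, 0, T, 0, y - T, h.nonBayesEq_of_thresholds (sub_nonneg.2 hy) le_rfl hT.1 le_rfl
    (sub_nonneg.2 hT.2) (by ring) (by ring) (fun _ => h.Pn_le_Pvu) (·.false.elim)
    (fun _ => le_rfl) (·.false.elim) (fun _ => ⟨h.Pvs_le_Pn.trans h.Pn_le_Pvu, le_rfl⟩),
    by ring⟩

theorem isEqRecklessMass_zero (h : AdmissibleParams r β f t) (hy : y ∈ Icc (0:ℝ) 1)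
    (hP : Pvu r β f t ≤ P) : IsEqRecklessMass r y β f t P 0 :=
  ⟨1 - y, 0, y, 0, 0, h.nonBayesEq_of_thresholds (sub_nonneg.2 hy.2) le_rfl hy.1 le_rfl le_rfl
    (by ring) (by ring) (fun _ => h.Pn_le_Pvu.trans hP) (·.false.elim) (fun _ => hP)
    (·.false.elim) (·.false.elim), by ring⟩

/-- One piece `s ↦ (P s, m s)` of the staircase: either the graph `P = p m` meets it, or it is
still above the end of the piece. -/
theorem existsEndoEq_or_lt (h : AdmissibleParams r β f t) (hp : ContinuousOn p (Icc 0 1))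
    {a b : ℝ} (hab : a ≤ b) {P m : ℝ → ℝ} (hP : Continuous P) (hm : Continuous m)
    (hPm : ∀ s ∈ Icc a b, P s ∈ Icc (0:ℝ) 1 ∧ IsEqRecklessMass r y β f t (P s) (m s))
    (ha : P a ≤ p (m a)) : ExistsEndoEq r y β f t p ∨ P b < p (m b) := by
  have hpm : ContinuousOn (p ∘ m) (Icc a b) :=
    hp.comp hm.continuousOn fun s hs => (hPm s hs).2.mem_Icc
      (sig_mem_Icc h.β_mem h.f_nonneg h.f_lt_t.le h.t_le_one (hPm s hs).1)
  refine (exists_eq_or_lt_of_le hab hP.continuousOn hpm ha).imp_left ?_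
  rintro ⟨s, hs, hfix⟩
  exact ⟨P s, (hPm s hs).1, m s, (hPm s hs).2, hfix⟩

theorem existsEndoEq_or_Pvs_lt (h : AdmissibleParams r β f t) (hy : y ∈ Icc (0:ℝ) 1)
    (hp : ContinuousOn p (Icc 0 1)) (h0 : 0 ≤ p 1) :
    ExistsEndoEq r y β f t p ∨ Pvs r f t < p (1 - sig β f t (Pvs r f t) * y) := by
  refine (h.existsEndoEq_or_lt hp h.Pvs_nonneg continuous_id continuous_const (m := fun _ => 1)
    (fun _ hP => ⟨⟨hP.1, hP.2.trans h.Pvs_mem_Icc.2⟩, h.isEqRecklessMass_one hy hP.2⟩)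
    h0).elim Or.inl fun hQ => ?_
  exact h.existsEndoEq_or_lt hp hy.1 continuous_const (by fun_prop)
    (fun T hT => ⟨h.Pvs_mem_Icc, h.isEqRecklessMass_Pvs hy.2 hT⟩) (by simpa using hQ.le)

theorem existsEndoEq_or_Pn_lt (h : AdmissibleParams r β f t) (hy : y ∈ Icc (0:ℝ) 1)
    (hp : ContinuousOn p (Icc 0 1)) (hQ : Pvs r f t ≤ p (1 - sig β f t (Pvs r f t) * y)) :
    ExistsEndoEq r y β f t p ∨ Pn r < p ((1 - sig β f t (Pn r)) * y) := by
  refine (h.existsEndoEq_or_lt hp h.Pvs_le_Pn continuous_id (by fun_prop)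
    (fun _ hP => ⟨⟨h.Pvs_nonneg.trans hP.1, hP.2.trans h.Pn_mem_Icc.2⟩,
      h.isEqRecklessMass_of_mem_Icc_Pvs_Pn hy hP⟩) hQ).elim Or.inl fun hN => ?_
  refine (h.existsEndoEq_or_lt hp (sub_nonneg.2 hy.2) continuous_const (by fun_prop)
    (fun T hT => ⟨h.Pn_mem_Icc, h.isEqRecklessMass_Pn hy.1 hT⟩)
    (by simpa using hN.le)).imp_right fun hN' => ?_
  convert hN' using 2
  ring

theorem existsEndoEq_or_Pvu_lt (h : AdmissibleParams r β f t) (hy : y ∈ Icc (0:ℝ) 1)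
    (hp : ContinuousOn p (Icc 0 1)) (hN : Pn r ≤ p ((1 - sig β f t (Pn r)) * y)) :
    ExistsEndoEq r y β f t p ∨ Pvu r β f t < p 0 := by
  refine (h.existsEndoEq_or_lt hp h.Pn_le_Pvu continuous_id (by fun_prop)
    (fun _ hP => ⟨⟨h.Pn_mem_Icc.1.trans hP.1, hP.2.trans h.Pvu_le_one⟩,
      h.isEqRecklessMass_of_mem_Icc_Pn_Pvu hy hP⟩) hN).elim Or.inl fun hU => ?_
  simpa using h.existsEndoEq_or_lt hp hy.1 continuous_const (by fun_prop)
    (fun T hT => ⟨h.Pvu_mem_Icc, h.isEqRecklessMass_Pvu hy.2 hT⟩) (by simpa using hU.le)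

theorem existsEndoEq_of_Pvu_le (h : AdmissibleParams r β f t) (hy : y ∈ Icc (0:ℝ) 1)
    (hp : ContinuousOn p (Icc 0 1)) (hU : Pvu r β f t ≤ p 0) (h1 : p 0 ≤ 1) :
    ExistsEndoEq r y β f t p :=
  (h.existsEndoEq_or_lt hp h.Pvu_le_one continuous_id continuous_const (m := fun _ => 0)
    (fun _ hP => ⟨⟨h.Pvu_mem_Icc.1.trans hP.1, hP.2⟩, h.isEqRecklessMass_zero hy hP.1⟩)
    hU).resolve_right h1.not_gt

end AdmissibleParams

theorem nonbayes_endo_equilibrium_exists_general (r y β f t : ℝ) (p : ℝ → ℝ)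
    (hr : 1 < r) (hy : y ∈ Icc (0:ℝ) 1) (hβ : β ∈ Icc (0:ℝ) 1)
    (hf : 0 ≤ f) (hft : f < t) (ht : t ≤ 1)
    (hp_cont : ContinuousOn p (Icc (0:ℝ) 1))
    (hp_maps : MapsTo p (Icc (0:ℝ) 1) (Icc (0:ℝ) 1)) :
    ∃ P xnC xnR xvC xvR xvT : ℝ,
      P ∈ Icc (0:ℝ) 1 ∧
      NonBayesEq r y β f t P xnC xnR xvC xvR xvT ∧
      P = p (xnR + xvR + (1 - sig β f t P) * xvT) := by
  have h : AdmissibleParams r β f t := ⟨by linarith, hβ, hf, hft, ht⟩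
  suffices ExistsEndoEq r y β f t p by
    obtain ⟨P, hP, m, ⟨xnC, xnR, xvC, xvR, xvT, hE, rfl⟩, hfix⟩ := this
    exact ⟨P, xnC, xnR, xvC, xvR, xvT, hP, hE, hfix⟩
  obtain hE | hQ := h.existsEndoEq_or_Pvs_lt hy hp_cont (hp_maps (right_mem_Icc.2 zero_le_one)).1
  · exact hE
  obtain hE | hN := h.existsEndoEq_or_Pn_lt hy hp_cont hQ.le
  · exact hE
  obtain hE | hU := h.existsEndoEq_or_Pvu_lt hy hp_cont hN.le
  · exact hE
  exact h.existsEndoEq_of_Pvu_le hy hp_cont hU.le (hp_maps (left_mem_Icc.2 zero_le_one)).2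

/-- existence of a non-Bayesian endogenous equilibrium. -/
theorem nonbayes_endo_equilibrium_exists (r y β f t : ℝ) (p : ℝ → ℝ)
    (hr : 1 < r) (hy : y ∈ Icc (0:ℝ) 1) (hβ : β ∈ Icc (0:ℝ) 1)
    (hf : 0 ≤ f) (hft : f < t) (ht : t ≤ 1)
    (hp_cont : ContinuousOn p (Icc (0:ℝ) 1)) (hp_mono : StrictMonoOn p (Icc (0:ℝ) 1))
    (hp_maps : MapsTo p (Icc (0:ℝ) 1) (Icc (0:ℝ) 1)) :
    ∃ P xnC xnR xvC xvR xvT : ℝ,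
      P ∈ Icc (0:ℝ) 1 ∧
      NonBayesEq r y β f t P xnC xnR xvC xvR xvT ∧
      P = p (xnR + xvR + (1 - sig β f t P) * xvT) :=
  nonbayes_endo_equilibrium_exists_general r y β f t p hr hy hβ hf hft ht hp_cont hp_maps
end

section
/- Let p : [0,1] → [0,1] be continuous and strictly increasing, and let (x, P) be a non-Bayesian endogenous equilibrium for parameters (β, y, r, f, t, p). Then: if P_vu < p(0) then P = p(0); if p(0) ≤ P_vu ≤ p((1-σ(P_vu))·y) then P = P_vu; if p((1-σ(P_vu))·y) < P_vu and P_n < p((1-σ(P_n))·y) then P_n < P < P_vu; if p((1-σ(P_n))·y) ≤ P_n ≤ p(1 - σ(P_n)·y) then P = P_n; if p(1 - σ(P_n)·y) < P_n and P_vs < p(1 - σ(P_vs)·y) then P_vs < P < P_n; if p(1 - σ(P_vs)·y) ≤ P_vs ≤ p(1) then P = P_vs; and if p(1) < P_vs then P = p(1). -/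
open Set

set_option maxHeartbeats 1000000 in
/-- characterization of the equilibrium accident probability of any
non-Bayesian endogenous equilibrium by the equilibrium families E1–E7. -/
theorem nonbayes_endo_prob_characterization (r y β f t : ℝ) (p : ℝ → ℝ)
    (hr : 1 < r) (hy : y ∈ Icc (0:ℝ) 1) (hβ : β ∈ Icc (0:ℝ) 1)
    (hf : 0 ≤ f) (hft : f < t) (ht : t ≤ 1)
    (hp_cont : ContinuousOn p (Icc (0:ℝ) 1)) (hp_mono : StrictMonoOn p (Icc (0:ℝ) 1))
    (hp_maps : MapsTo p (Icc (0:ℝ) 1) (Icc (0:ℝ) 1))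
    (P xnC xnR xvC xvR xvT : ℝ) (hP : P ∈ Icc (0:ℝ) 1)
    (heq : NonBayesEq r y β f t P xnC xnR xvC xvR xvT)
    (hendo : P = p (xnR + xvR + (1 - sig β f t P) * xvT)) :
    (Pvu r β f t < p 0 → P = p 0) ∧
    (p 0 ≤ Pvu r β f t → Pvu r β f t ≤ p ((1 - sig β f t (Pvu r β f t)) * y) →
      P = Pvu r β f t) ∧
    (p ((1 - sig β f t (Pvu r β f t)) * y) < Pvu r β f t →
      Pn r < p ((1 - sig β f t (Pn r)) * y) → Pn r < P ∧ P < Pvu r β f t) ∧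
    (p ((1 - sig β f t (Pn r)) * y) ≤ Pn r → Pn r ≤ p (1 - sig β f t (Pn r) * y) →
      P = Pn r) ∧
    (p (1 - sig β f t (Pn r) * y) < Pn r → Pvs r f t < p (1 - sig β f t (Pvs r f t) * y) →
      Pvs r f t < P ∧ P < Pn r) ∧
    (p (1 - sig β f t (Pvs r f t) * y) ≤ Pvs r f t → Pvs r f t ≤ p 1 → P = Pvs r f t) ∧
    (p 1 < Pvs r f t → P = p 1) := by
  obtain ⟨hy0, hy1⟩ := hy
  obtain ⟨hβ0, hβ1⟩ := hβ
  obtain ⟨hP0, hP1⟩ := hP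
  have hr0 : (0:ℝ) < r := lt_trans one_pos hr
  have ht0 : 0 < t := lt_of_le_of_lt hf hft
  have htf : 0 ≤ t - f := by linarith
  have hD1 : 0 < r * t + f := by nlinarith
  have hβt : β * t ≤ 1 := by nlinarith
  have hβf1 : β * f < 1 := by nlinarith
  have hD3 : 0 < 1 + r * (1 - β * t) - β * f := by nlinarith
  have hD2 : (0:ℝ) < 1 + r := by linarith
  -- threshold facts
  have hvs0 : 0 ≤ Pvs r f t := div_nonneg hf hD1.le
  have hvs_lt_n : Pvs r f t < Pn r := by
    unfold Pvs Pn
    rw [div_lt_div_iff₀ hD1 hD2]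
    nlinarith [mul_pos hr0 (sub_pos.mpr hft)]
  have hn_le_vu : Pn r ≤ Pvu r β f t := by
    unfold Pn Pvu
    rw [div_le_div_iff₀ hD2 hD3]
    nlinarith [mul_nonneg (mul_nonneg hr0.le hβ0) htf]
  have hvu_le_one : Pvu r β f t ≤ 1 := by
    unfold Pvu
    rw [div_le_one hD3]
    nlinarith [mul_nonneg hr0.le (by nlinarith : (0:ℝ) ≤ 1 - β * t)]
  have hn_pos : 0 < Pn r := by unfold Pn; positivity
  have hvs_mem : Pvs r f t ∈ Icc (0:ℝ) 1 := ⟨hvs0, by linarith [hvs_lt_n, hn_le_vu, hvu_le_one]⟩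
  have hn_mem : Pn r ∈ Icc (0:ℝ) 1 := ⟨hn_pos.le, by linarith [hn_le_vu, hvu_le_one]⟩
  have hvu_mem : Pvu r β f t ∈ Icc (0:ℝ) 1 := ⟨by linarith [hvs0, hvs_lt_n, hn_le_vu], hvu_le_one⟩
  -- key cost comparison inequalities
  have keyCR : ∀ Q : ℝ, Q < Pn r → r * Q < 1 - Q := by
    intro Q hQ
    unfold Pn at hQ
    have h1 : Q * (1 + r) < 1 := (lt_div_iff₀ hD2).mp hQ
    nlinarith
  have keyRC : ∀ Q : ℝ, Pn r < Q → 1 - Q < r * Q := by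
    intro Q hQ
    unfold Pn at hQ
    have h1 : 1 < Q * (1 + r) := (div_lt_iff₀ hD2).mp hQ
    nlinarith
  have keyCT : ∀ Q : ℝ, Q < Pvu r β f t → (1 - Q) * (β * f) + r * Q * (1 - β * t) < 1 - Q := by
    intro Q hQ
    unfold Pvu at hQ
    have h1 : Q * (1 + r * (1 - β * t) - β * f) < 1 - β * f := (lt_div_iff₀ hD3).mp hQ
    nlinarith
  have keyTC : ∀ Q : ℝ, Pvu r β f t < Q → 1 - Q < (1 - Q) * (β * f) + r * Q * (1 - β * t) := by
    intro Q hQ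
    unfold Pvu at hQ
    have h1 : 1 - β * f < Q * (1 + r * (1 - β * t) - β * f) := (div_lt_iff₀ hD3).mp hQ
    nlinarith
  have keyRT : ∀ Q : ℝ, 0 < β → Q < Pvs r f t →
      r * Q < (1 - Q) * (β * f) + r * Q * (1 - β * t) := by
    intro Q hb hQ
    unfold Pvs at hQ
    have h1 : Q * (r * t + f) < f := (lt_div_iff₀ hD1).mp hQ
    have h2 : (0:ℝ) < f - Q * (r * t + f) := by linarith
    have h3 := mul_pos hb h2
    nlinarith [h3]
  have keyTR : ∀ Q : ℝ, 0 < β → Pvs r f t < Q →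
      (1 - Q) * (β * f) + r * Q * (1 - β * t) < r * Q := by
    intro Q hb hQ
    unfold Pvs at hQ
    have h1 : f < Q * (r * t + f) := (div_lt_iff₀ hD1).mp hQ
    have h2 : (0:ℝ) < Q * (r * t + f) - f := by linarith
    have h3 := mul_pos hb h2
    nlinarith [h3]
  -- sig facts
  have hsig0 : ∀ Q : ℝ, 0 ≤ Q → Q ≤ 1 → 0 ≤ sig β f t Q := by
    intro Q h0 h1
    unfold sig
    have : 0 ≤ Q * t + (1 - Q) * f := by
      nlinarith [mul_nonneg h0 ht0.le, mul_nonneg (by linarith : (0:ℝ) ≤ 1 - Q) hf]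
    exact mul_nonneg hβ0 this
  have hsig1 : ∀ Q : ℝ, 0 ≤ Q → Q ≤ 1 → sig β f t Q ≤ 1 := by
    intro Q h0 h1
    unfold sig
    nlinarith [mul_nonneg hβ0 (mul_nonneg (by linarith : (0:ℝ) ≤ 1 - Q) htf)]
  have hsigm : ∀ Q1 Q2 : ℝ, Q1 ≤ Q2 → sig β f t Q1 ≤ sig β f t Q2 := by
    intro Q1 Q2 h12
    unfold sig
    nlinarith [mul_nonneg hβ0 (mul_nonneg (by linarith : (0:ℝ) ≤ Q2 - Q1) htf)]
  have hσP0 : 0 ≤ sig β f t P := hsig0 P hP0 hP1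
  have hσP1 : sig β f t P ≤ 1 := hsig1 P hP0 hP1
  set X := xnR + xvR + (1 - sig β f t P) * xvT with hXdef
  have hsum_n := heq.sum_n
  have hsum_v := heq.sum_v
  have hxnC := heq.xnC_nonneg
  have hxnR := heq.xnR_nonneg
  have hxvC := heq.xvC_nonneg
  have hxvR := heq.xvR_nonneg
  have hxvT := heq.xvT_nonneg
  have hX0 : 0 ≤ X := by
    rw [hXdef]
    have := mul_nonneg (by linarith : (0:ℝ) ≤ 1 - sig β f t P) hxvT
    linarith
  have hX1 : X ≤ 1 := by
    rw [hXdef]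
    nlinarith [mul_nonneg hσP0 hxvT]
  have hXmem : X ∈ Icc (0:ℝ) 1 := ⟨hX0, hX1⟩
  have hmono := hp_mono.monotoneOn
  have h0mem : (0:ℝ) ∈ Icc (0:ℝ) 1 := ⟨le_refl 0, zero_le_one⟩
  have h1mem : (1:ℝ) ∈ Icc (0:ℝ) 1 := ⟨zero_le_one, le_refl 1⟩
  have hz1mem : ∀ Q : ℝ, 0 ≤ Q → Q ≤ 1 → (1 - sig β f t Q) * y ∈ Icc (0:ℝ) 1 := by
    intro Q h0 h1
    have hs0 := hsig0 Q h0 h1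
    have hs1 := hsig1 Q h0 h1
    constructor
    · exact mul_nonneg (by linarith) hy0
    · nlinarith
  have hz2mem : ∀ Q : ℝ, 0 ≤ Q → Q ≤ 1 → 1 - sig β f t Q * y ∈ Icc (0:ℝ) 1 := by
    intro Q h0 h1
    have hs0 := hsig0 Q h0 h1
    have hs1 := hsig1 Q h0 h1
    constructor
    · nlinarith
    · nlinarith [mul_nonneg hs0 hy0]
  -- zero-mass facts
  have hxvC0 : P < Pvu r β f t → xvC = 0 := by
    intro h
    by_contra hne
    have hpos : 0 < xvC := hxvC.lt_of_ne (Ne.symm hne)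
    have h2 := le_trans (heq.best_vC hpos) (min_le_right _ _)
    linarith [keyCT P h]
  have hxnC0 : P < Pn r → xnC = 0 := by
    intro h
    by_contra hne
    have hpos : 0 < xnC := hxnC.lt_of_ne (Ne.symm hne)
    linarith [heq.best_nC hpos, keyCR P h]
  have hxnR0 : Pn r < P → xnR = 0 := by
    intro h
    by_contra hne
    have hpos : 0 < xnR := hxnR.lt_of_ne (Ne.symm hne)
    linarith [heq.best_nR hpos, keyRC P h]
  have hxvR0n : Pn r < P → xvR = 0 := by
    intro h
    by_contra hne
    have hpos : 0 < xvR := hxvR.lt_of_ne (Ne.symm hne)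
    have h2 := le_trans (heq.best_vR hpos) (min_le_left _ _)
    linarith [keyRC P h]
  have hxvT0vu : Pvu r β f t < P → xvT = 0 := by
    intro h
    by_contra hne
    have hpos : 0 < xvT := hxvT.lt_of_ne (Ne.symm hne)
    have h2 := le_trans (heq.best_vT hpos) (min_le_left _ _)
    linarith [keyTC P h]
  have hxvR0vs : 0 < β → Pvs r f t < P → xvR = 0 := by
    intro hb h
    by_contra hne
    have hpos : 0 < xvR := hxvR.lt_of_ne (Ne.symm hne)
    have h2 := le_trans (heq.best_vR hpos) (min_le_right _ _)
    linarith [keyTR P hb h]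
  have hxvT0vs : 0 < β → P < Pvs r f t → xvT = 0 := by
    intro hb h
    by_contra hne
    have hpos : 0 < xvT := hxvT.lt_of_ne (Ne.symm hne)
    have h2 := le_trans (heq.best_vT hpos) (min_le_right _ _)
    linarith [keyRT P hb h]
  -- aggregate recklessness bounds in each region
  have L1 : P < Pvu r β f t → (1 - sig β f t P) * y ≤ X := by
    intro h
    have hc := hxvC0 h
    rw [hXdef]
    nlinarith [mul_nonneg hσP0 hxvR]
  have L2 : Pvu r β f t < P → X = 0 := by
    intro h
    have hn : Pn r < P := lt_of_le_of_lt hn_le_vu h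
    rw [hXdef, hxnR0 hn, hxvR0n hn, hxvT0vu h]
    ring
  have L3 : P < Pn r → 1 - sig β f t P * y ≤ X := by
    intro h
    have hc1 := hxnC0 h
    have hc2 := hxvC0 (lt_of_lt_of_le h hn_le_vu)
    rw [hXdef]
    nlinarith [mul_nonneg hσP0 hxvR]
  have L4 : Pn r < P → X ≤ (1 - sig β f t P) * y := by
    intro h
    have h1 := hxnR0 h
    have h2 := hxvR0n h
    rw [hXdef, h1, h2]
    nlinarith [mul_nonneg (by linarith : (0:ℝ) ≤ 1 - sig β f t P) hxvC]
  have L5 : P < Pvs r f t → X = 1 := by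
    intro h
    have hn : P < Pn r := lt_trans h hvs_lt_n
    have hc1 := hxnC0 hn
    have hc2 := hxvC0 (lt_of_lt_of_le hn hn_le_vu)
    rcases hβ0.eq_or_lt with hb | hb
    · have hs : sig β f t P = 0 := by unfold sig; rw [← hb]; ring
      rw [hXdef, hs]
      linarith
    · have ht3 := hxvT0vs hb h
      rw [hXdef, ht3]
      linarith
  have L6 : Pvs r f t < P → X ≤ 1 - sig β f t P * y := by
    intro h
    rcases hβ0.eq_or_lt with hb | hb
    · have hs : sig β f t P = 0 := by unfold sig; rw [← hb]; ring
      rw [hs]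
      linarith [hX1]
    · have h1 := hxvR0vs hb h
      rw [hXdef, h1]
      nlinarith [mul_nonneg (by linarith : (0:ℝ) ≤ 1 - sig β f t P) (by linarith [hsum_v] : (0:ℝ) ≤ y - xvT), mul_nonneg hσP0 hxvT]
  refine ⟨?_, ?_, ?_, ?_, ?_, ?_, ?_⟩
  · -- Case 1
    intro h
    rcases le_or_gt P (Pvu r β f t) with hle | hlt
    · exfalso
      have := hmono h0mem hXmem hX0
      rw [← hendo] at this
      linarith
    · rw [hendo, L2 hlt]
  · -- Case 2
    intro h1 h2
    rcases lt_trichotomy P (Pvu r β f t) with hlt | heqP | hgt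
    · exfalso
      have hL := L1 hlt
      have hsm : sig β f t P ≤ sig β f t (Pvu r β f t) := hsigm _ _ hlt.le
      have harg : (1 - sig β f t (Pvu r β f t)) * y ≤ X :=
        le_trans (mul_le_mul_of_nonneg_right (by linarith) hy0) hL
      have := hmono (hz1mem _ hvu_mem.1 hvu_mem.2) hXmem harg
      rw [← hendo] at this
      linarith
    · exact heqP
    · exfalso
      have hX := L2 hgt
      rw [hX] at hendo
      linarith
  · -- Case 3
    intro h1 h2
    have hnvu : Pn r < Pvu r β f t := by
      rcases hn_le_vu.eq_or_lt with he | hl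
      · exfalso; rw [← he] at h1; linarith
      · exact hl
    constructor
    · by_contra hc
      push_neg at hc
      have hlt : P < Pvu r β f t := lt_of_le_of_lt hc hnvu
      have hL := L1 hlt
      have hsm : sig β f t P ≤ sig β f t (Pn r) := hsigm _ _ hc
      have harg : (1 - sig β f t (Pn r)) * y ≤ X :=
        le_trans (mul_le_mul_of_nonneg_right (by linarith) hy0) hL
      have := hmono (hz1mem _ hn_mem.1 hn_mem.2) hXmem harg
      rw [← hendo] at this
      linarith
    · by_contra hc
      push_neg at hc
      rcases hc.eq_or_lt with he | hl
      · -- P = Pvu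
        have hPn : Pn r < P := by rw [← he]; exact hnvu
        have hL := L4 hPn
        have hL' : X ≤ (1 - sig β f t (Pvu r β f t)) * y := by rw [he]; exact hL
        have := hmono hXmem (hz1mem _ hvu_mem.1 hvu_mem.2) hL'
        rw [← hendo] at this
        linarith
      · have hX := L2 hl
        rw [hX] at hendo
        have := hmono h0mem (hz1mem _ hvu_mem.1 hvu_mem.2) (hz1mem _ hvu_mem.1 hvu_mem.2).1
        linarith
  · -- Case 4
    intro h1 h2
    rcases lt_trichotomy P (Pn r) with hlt | heqP | hgt
    · exfalso
      have hL := L3 hlt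
      have hsm : sig β f t P ≤ sig β f t (Pn r) := hsigm _ _ hlt.le
      have harg : 1 - sig β f t (Pn r) * y ≤ X := by
        have : sig β f t P * y ≤ sig β f t (Pn r) * y := mul_le_mul_of_nonneg_right hsm hy0
        linarith
      have := hmono (hz2mem _ hn_mem.1 hn_mem.2) hXmem harg
      rw [← hendo] at this
      linarith
    · exact heqP
    · exfalso
      have hL := L4 hgt
      have hsm : sig β f t (Pn r) ≤ sig β f t P := hsigm _ _ hgt.le
      have harg : X ≤ (1 - sig β f t (Pn r)) * y :=
        le_trans hL (mul_le_mul_of_nonneg_right (by linarith) hy0)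
      have := hmono hXmem (hz1mem _ hn_mem.1 hn_mem.2) harg
      rw [← hendo] at this
      linarith
  · -- Case 5
    intro h1 h2
    constructor
    · by_contra hc
      push_neg at hc
      have hlt : P < Pn r := lt_of_le_of_lt hc hvs_lt_n
      have hL := L3 hlt
      have hsm : sig β f t P ≤ sig β f t (Pvs r f t) := hsigm _ _ hc
      have harg : 1 - sig β f t (Pvs r f t) * y ≤ X := by
        have : sig β f t P * y ≤ sig β f t (Pvs r f t) * y := mul_le_mul_of_nonneg_right hsm hy0
        linarith
      have := hmono (hz2mem _ hvs_mem.1 hvs_mem.2) hXmem harg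
      rw [← hendo] at this
      linarith
    · by_contra hc
      push_neg at hc
      have hvsP : Pvs r f t < P := lt_of_lt_of_le hvs_lt_n hc
      have hL := L6 hvsP
      have hsm : sig β f t (Pn r) ≤ sig β f t P := hsigm _ _ hc
      have harg : X ≤ 1 - sig β f t (Pn r) * y := by
        have : sig β f t (Pn r) * y ≤ sig β f t P * y := mul_le_mul_of_nonneg_right hsm hy0
        linarith
      have := hmono hXmem (hz2mem _ hn_mem.1 hn_mem.2) harg
      rw [← hendo] at this
      linarith
  · -- Case 6
    intro h1 h2
    rcases lt_trichotomy P (Pvs r f t) with hlt | heqP | hgt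
    · exfalso
      have hX := L5 hlt
      rw [hX] at hendo
      linarith
    · exact heqP
    · exfalso
      have hL := L6 hgt
      have hsm : sig β f t (Pvs r f t) ≤ sig β f t P := hsigm _ _ hgt.le
      have harg : X ≤ 1 - sig β f t (Pvs r f t) * y := by
        have : sig β f t (Pvs r f t) * y ≤ sig β f t P * y := mul_le_mul_of_nonneg_right hsm hy0
        linarith
      have := hmono hXmem (hz2mem _ hvs_mem.1 hvs_mem.2) harg
      rw [← hendo] at this
      linarith
  · -- Case 7
    intro h
    rcases lt_or_ge P (Pvs r f t) with hlt | hle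
    · rw [hendo, L5 hlt]
    · exfalso
      have := hmono hXmem h1mem hX1
      rw [← hendo] at this
      linarith
end

section
/- Let p : [0,1] → [0,1] be continuous and strictly increasing. For the same parameters (β, y, r, f, t, p), let (x_B, P_B) be any Bayesian endogenous equilibrium and (x_I, P_I) any non-Bayesian endogenous equilibrium. Then P_B = P_I: the equilibrium accident probabilities of the Bayesian and non-Bayesian models coincide. -/
open Set

set_option maxHeartbeats 2000000 in
/-- for the same parameters, the accident probabilities of any Bayesian and
any non-Bayesian endogenous equilibria coincide. -/
theorem endo_probs_equal (r y β f t : ℝ) (p : ℝ → ℝ)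
    (hr : 1 < r) (hy : y ∈ Icc (0:ℝ) 1) (hβ : β ∈ Icc (0:ℝ) 1)
    (hf : 0 ≤ f) (hft : f < t) (ht : t ≤ 1)
    (hp_cont : ContinuousOn p (Icc (0:ℝ) 1)) (hp_mono : StrictMonoOn p (Icc (0:ℝ) 1))
    (hp_maps : MapsTo p (Icc (0:ℝ) 1) (Icc (0:ℝ) 1))
    (PB xnC xnR cu ρu cs ρs PI xnC' xnR' xvC xvR xvT : ℝ)
    (hPB : PB ∈ Icc (0:ℝ) 1) (hPI : PI ∈ Icc (0:ℝ) 1)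
    (hB : BayesEq r y β f t PB xnC xnR cu ρu cs ρs)
    (hBendo : PB = p (xnR + ρu * (1 - sig β f t PB) * y + ρs * sig β f t PB * y))
    (hI : NonBayesEq r y β f t PI xnC' xnR' xvC xvR xvT)
    (hIendo : PI = p (xnR' + xvR + (1 - sig β f t PI) * xvT)) :
    PB = PI := by
  obtain ⟨hy0, hy1⟩ := hy
  obtain ⟨hβ0, hβ1⟩ := hβ
  obtain ⟨hPB0, hPB1⟩ := hPB
  obtain ⟨hPI0, hPI1⟩ := hPI
  have ht0 : 0 < t := lt_of_le_of_lt hf hft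
  have hf1 : f < 1 := lt_of_lt_of_le hft ht
  have hrpos : (0:ℝ) < r := by linarith
  have h1mβf : (0:ℝ) < 1 - β * f := by nlinarith
  have h1mβt : (0:ℝ) ≤ 1 - β * t := by nlinarith
  have hβft : β * f ≤ β * t := by nlinarith
  have hσ0 : ∀ P : ℝ, 0 ≤ P → P ≤ 1 → 0 ≤ sig β f t P := by
    intro P h0 h1; unfold sig
    have : 0 ≤ P * t + (1 - P) * f := by nlinarith
    exact mul_nonneg hβ0 this
  have hσ1 : ∀ P : ℝ, 0 ≤ P → P ≤ 1 → sig β f t P ≤ 1 := by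
    intro P h0 h1; unfold sig
    have h2 : P * t + (1 - P) * f ≤ 1 := by nlinarith
    have h3 : 0 ≤ P * t + (1 - P) * f := by nlinarith
    nlinarith
  have hσmono : ∀ P Q : ℝ, P ≤ Q → sig β f t P ≤ sig β f t Q := by
    intro P Q hPQ; unfold sig
    nlinarith [mul_nonneg hβ0 (mul_nonneg (sub_nonneg.2 hPQ) (sub_nonneg.2 hft.le))]
  have hσB0 : 0 ≤ sig β f t PB := hσ0 PB hPB0 hPB1
  have hσB1 : sig β f t PB ≤ 1 := hσ1 PB hPB0 hPB1
  have hσI0 : 0 ≤ sig β f t PI := hσ0 PI hPI0 hPI1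
  have hσI1 : sig β f t PI ≤ 1 := hσ1 PI hPI0 hPI1
  have hρu1 : ρu = 1 - cu := by linarith [hB.sum_u]
  have hρs1 : ρs = 1 - cs := by linarith [hB.sum_s]
  -- aggregate reckless masses lie in [0,1]
  have hRB_mem : xnR + ρu * (1 - sig β f t PB) * y + ρs * sig β f t PB * y ∈ Icc (0:ℝ) 1 := by
    constructor
    · have e1 : 0 ≤ ρu * (1 - sig β f t PB) * y :=
        mul_nonneg (mul_nonneg hB.ρu_nonneg (by linarith)) hy0
      have e2 : 0 ≤ ρs * sig β f t PB * y :=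
        mul_nonneg (mul_nonneg hB.ρs_nonneg hσB0) hy0
      linarith [hB.xnR_nonneg]
    · have e1 : 0 ≤ cu * (1 - sig β f t PB) * y :=
        mul_nonneg (mul_nonneg hB.cu_nonneg (by linarith)) hy0
      have e2 : 0 ≤ cs * sig β f t PB * y :=
        mul_nonneg (mul_nonneg hB.cs_nonneg hσB0) hy0
      have e3 : xnR ≤ 1 - y := by linarith [hB.sum_n, hB.xnC_nonneg]
      have e4 : ρu * (1 - sig β f t PB) * y + ρs * sig β f t PB * y
          = y - cu * (1 - sig β f t PB) * y - cs * sig β f t PB * y := by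
        rw [hρu1, hρs1]; ring
      linarith
  have hRI_mem : xnR' + xvR + (1 - sig β f t PI) * xvT ∈ Icc (0:ℝ) 1 := by
    constructor
    · have e1 : 0 ≤ (1 - sig β f t PI) * xvT :=
        mul_nonneg (by linarith) hI.xvT_nonneg
      linarith [hI.xnR_nonneg, hI.xvR_nonneg]
    · have e1 : (1 - sig β f t PI) * xvT ≤ xvT := by
        nlinarith [mul_nonneg hσI0 hI.xvT_nonneg]
      have e2 : xnR' ≤ 1 - y := by linarith [hI.sum_n, hI.xnC_nonneg]
      linarith [hI.sum_v, hI.xvC_nonneg]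
  rcases lt_trichotomy PB PI with hlt | heq | hgt
  · -- PB < PI : show R_I ≤ R_B, contradiction
    exfalso
    have hnR : xnR' ≤ xnR := by
      rcases hI.xnR_nonneg.lt_or_eq with hx | hx
      · have h1 := hI.best_nR hx
        have hxnC0 : xnC ≤ 0 := by
          by_contra hc; push_neg at hc
          have h2 := hB.best_nC hc
          nlinarith
        linarith [hB.sum_n, hI.sum_n, hB.xnC_nonneg, hI.xnC_nonneg]
      · rw [← hx]; exact hB.xnR_nonneg
    have hcu_kill : r * PI * (1 - β * t) ≤ (1 - PI) * (1 - β * f) →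
        cu * (1 - sig β f t PB) * y = 0 := by
      intro hstart
      by_contra hc
      have hcpos : 0 < cu * (1 - sig β f t PB) * y :=
        lt_of_le_of_ne (mul_nonneg (mul_nonneg hB.cu_nonneg (by linarith)) hy0) (Ne.symm hc)
      have hineq := hB.best_cu hcpos
      have e1 : r * PB ≤ r * PI := by nlinarith
      have e2 : r * PB * (1 - β * t) ≤ r * PI * (1 - β * t) :=
        mul_le_mul_of_nonneg_right e1 h1mβt
      have e5 : (1 - PI) * (1 - β * f) < (1 - PB) * (1 - β * f) :=
        mul_lt_mul_of_pos_right (by linarith) h1mβf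
      linarith
    have hv : xvR + (1 - sig β f t PI) * xvT ≤
        ρu * (1 - sig β f t PB) * y + ρs * sig β f t PB * y := by
      rcases hI.xvR_nonneg.lt_or_eq with hx | hx
      · -- reckless V2V drivers exist in non-Bayesian eq
        have h1 := hI.best_vR hx
        have h1C : r * PI ≤ 1 - PI := le_trans h1 (min_le_left _ _)
        have h1T : r * PI ≤ (1 - PI) * (β * f) + r * PI * (1 - β * t) :=
          le_trans h1 (min_le_right _ _)
        have h1T' : r * PI * (β * t) ≤ (1 - PI) * (β * f) := by nlinarith
        have hst : r * PI * (1 - β * t) ≤ (1 - PI) * (1 - β * f) := by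
          have e3 : r * PI * (1 - β * t) ≤ (1 - PI) * (1 - β * t) :=
            mul_le_mul_of_nonneg_right h1C h1mβt
          have e4 : (1 - PI) * (1 - β * t) ≤ (1 - PI) * (1 - β * f) := by nlinarith
          linarith
        have hcu0 := hcu_kill hst
        have hcs0 : cs * sig β f t PB * y = 0 := by
          by_contra hc
          have hcpos : 0 < cs * sig β f t PB * y :=
            lt_of_le_of_ne (mul_nonneg (mul_nonneg hB.cs_nonneg hσB0) hy0) (Ne.symm hc)
          have hbcs := hB.best_cs hcpos
          have hσBpos : 0 < sig β f t PB := by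
            by_contra hs; push_neg at hs
            have e : cs * sig β f t PB ≤ 0 :=
              mul_nonpos_of_nonneg_of_nonpos hB.cs_nonneg hs
            nlinarith [mul_nonpos_of_nonpos_of_nonneg e hy0]
          have hβpos : 0 < β := by
            rcases hβ0.lt_or_eq with hb | hb
            · exact hb
            · exfalso; unfold sig at hσBpos; rw [← hb] at hσBpos; simp at hσBpos
          -- chain: r*PI*(β*t) ≤ (1-PI)*(β*f) ≤ (1-PB)*(β*f) ≤ r*PB*(β*t) < r*PI*(β*t)
          have e1 : (1 - PI) * (β * f) ≤ (1 - PB) * (β * f) :=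
            mul_le_mul_of_nonneg_right (by linarith) (mul_nonneg hβ0 hf)
          nlinarith [mul_pos (mul_pos hrpos hβpos) ht0]
        rw [hρu1, hρs1]
        nlinarith [hcu0, hcs0, mul_nonneg hσI0 hI.xvT_nonneg, hI.xvC_nonneg, hI.sum_v]
      · rcases hI.xvT_nonneg.lt_or_eq with hxt | hxt
        · have h1 := hI.best_vT hxt
          have h1C : (1 - PI) * (β * f) + r * PI * (1 - β * t) ≤ 1 - PI :=
            le_trans h1 (min_le_left _ _)
          have hst : r * PI * (1 - β * t) ≤ (1 - PI) * (1 - β * f) := by nlinarith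
          have hcu0 := hcu_kill hst
          have hxTy : xvT ≤ y := by
            linarith [hI.sum_v, hI.xvC_nonneg, hI.xvR_nonneg]
          have e1 : (1 - sig β f t PI) * xvT ≤ (1 - sig β f t PI) * y :=
            mul_le_mul_of_nonneg_left hxTy (by linarith)
          have e2 : (1 - sig β f t PI) * y ≤ (1 - sig β f t PB) * y :=
            mul_le_mul_of_nonneg_right (by linarith [hσmono PB PI hlt.le]) hy0
          rw [hρu1]
          nlinarith [mul_nonneg (mul_nonneg hB.ρs_nonneg hσB0) hy0, hcu0]
        · rw [← hx, ← hxt]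
          have e1 : 0 ≤ ρu * (1 - sig β f t PB) * y :=
            mul_nonneg (mul_nonneg hB.ρu_nonneg (by linarith)) hy0
          have e2 : 0 ≤ ρs * sig β f t PB * y :=
            mul_nonneg (mul_nonneg hB.ρs_nonneg hσB0) hy0
          nlinarith
    have hRle : xnR' + xvR + (1 - sig β f t PI) * xvT ≤
        xnR + ρu * (1 - sig β f t PB) * y + ρs * sig β f t PB * y := by linarith
    have hm := hp_mono.monotoneOn hRI_mem hRB_mem hRle
    rw [← hIendo, ← hBendo] at hm
    linarith
  · exact heq
  · -- PI < PB : show R_B ≤ R_I, contradiction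
    exfalso
    have hnR : xnR ≤ xnR' := by
      rcases hB.xnR_nonneg.lt_or_eq with hx | hx
      · have h1 := hB.best_nR hx
        have hxnC0 : xnC' ≤ 0 := by
          by_contra hc; push_neg at hc
          have h2 := hI.best_nC hc
          nlinarith
        linarith [hB.sum_n, hI.sum_n, hB.xnC_nonneg, hI.xnC_nonneg]
      · rw [← hx]; exact hI.xnR_nonneg
    have hxvC_kill : r * PB * (1 - β * t) ≤ (1 - PB) * (1 - β * f) → xvC = 0 := by
      intro hstart
      by_contra hc
      have hcpos : 0 < xvC := lt_of_le_of_ne hI.xvC_nonneg (Ne.symm hc)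
      have h1 := hI.best_vC hcpos
      have h1T : 1 - PI ≤ (1 - PI) * (β * f) + r * PI * (1 - β * t) :=
        le_trans h1 (min_le_right _ _)
      -- i.e. (1-PI)*(1-β*f) ≤ r*PI*(1-β*t), but chain gives strict reverse
      have e1 : r * PI ≤ r * PB := by nlinarith
      have e2 : r * PI * (1 - β * t) ≤ r * PB * (1 - β * t) :=
        mul_le_mul_of_nonneg_right e1 h1mβt
      have e5 : (1 - PB) * (1 - β * f) < (1 - PI) * (1 - β * f) :=
        mul_lt_mul_of_pos_right (by linarith) h1mβf
      nlinarith
    have hv : ρu * (1 - sig β f t PB) * y + ρs * sig β f t PB * y ≤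
        xvR + (1 - sig β f t PI) * xvT := by
      by_cases hρspos : 0 < ρs * sig β f t PB * y
      · have hbρs := hB.best_ρs hρspos
        have hσBpos : 0 < sig β f t PB := by
          by_contra hs; push_neg at hs
          have e : ρs * sig β f t PB ≤ 0 :=
            mul_nonpos_of_nonneg_of_nonpos hB.ρs_nonneg hs
          nlinarith [mul_nonpos_of_nonpos_of_nonneg e hy0]
        have hβpos : 0 < β := by
          rcases hβ0.lt_or_eq with hb | hb
          · exact hb
          · exfalso; unfold sig at hσBpos; rw [← hb] at hσBpos; simp at hσBpos
        -- PB < 1 and r * PB < 1 - PB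
        have hPBlt1 : PB < 1 := by
          rcases hPB1.lt_or_eq with h1 | h1
          · exact h1
          · exfalso; rw [h1] at hbρs; nlinarith [mul_pos (mul_pos hrpos hβpos) ht0]
        have hrPB : r * PB < 1 - PB := by
          nlinarith [mul_pos hβpos ht0,
            mul_pos (mul_pos (sub_pos.2 hPBlt1) hβpos) (sub_pos.2 hft)]
        -- xvC = 0
        have hxvC0 : xvC = 0 := by
          by_contra hc
          have hcpos : 0 < xvC := lt_of_le_of_ne hI.xvC_nonneg (Ne.symm hc)
          have h1 := hI.best_vC hcpos
          have h1R : 1 - PI ≤ r * PI := le_trans h1 (min_le_left _ _)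
          nlinarith
        -- xvT = 0 : trusting is strictly worse than reckless at PI
        have hxvT0 : xvT = 0 := by
          by_contra hc
          have hcpos : 0 < xvT := lt_of_le_of_ne hI.xvT_nonneg (Ne.symm hc)
          have h1 := hI.best_vT hcpos
          have h1R : (1 - PI) * (β * f) + r * PI * (1 - β * t) ≤ r * PI :=
            le_trans h1 (min_le_right _ _)
          -- i.e. (1-PI)*(β*f) ≤ r*PI*(β*t); but r*PI*(β*t) < r*PB*(β*t) ≤ (1-PB)*(β*f) ≤ (1-PI)*(β*f)
          have e1 : (1 - PB) * (β * f) ≤ (1 - PI) * (β * f) :=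
            mul_le_mul_of_nonneg_right (by linarith) (mul_nonneg hβ0 hf)
          nlinarith [mul_pos (mul_pos hrpos hβpos) ht0]
        have hxvR : xvR = y := by
          have hs := hI.sum_v; rw [hxvC0, hxvT0] at hs; linarith
        rw [hxvR, hxvT0, hρu1, hρs1]
        nlinarith [mul_nonneg (mul_nonneg hB.cu_nonneg (by linarith : (0:ℝ) ≤ 1 - sig β f t PB)) hy0,
          mul_nonneg (mul_nonneg hB.cs_nonneg hσB0) hy0]
      · push_neg at hρspos
        have hρs0 : ρs * sig β f t PB * y = 0 :=
          le_antisymm hρspos (mul_nonneg (mul_nonneg hB.ρs_nonneg hσB0) hy0)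
        by_cases hρupos : 0 < ρu * (1 - sig β f t PB) * y
        · have hbρu := hB.best_ρu hρupos
          have hst : r * PB * (1 - β * t) ≤ (1 - PB) * (1 - β * f) := hbρu
          have hxvC0 := hxvC_kill hst
          -- ρu*(1-σB)*y ≤ (1-σB)*y ≤ (1-σI)*y = (1-σI)*(xvR+xvT) ≤ xvR + (1-σI)*xvT
          have e0 : ρu * (1 - sig β f t PB) * y ≤ (1 - sig β f t PB) * y := by
            nlinarith [mul_nonneg (mul_nonneg hB.cu_nonneg (by linarith : (0:ℝ) ≤ 1 - sig β f t PB)) hy0, hρu1]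
          have e1 : (1 - sig β f t PB) * y ≤ (1 - sig β f t PI) * y :=
            mul_le_mul_of_nonneg_right (by linarith [hσmono PI PB hgt.le]) hy0
          have e2 : (1 - sig β f t PI) * y = (1 - sig β f t PI) * (xvR + xvT) := by
            rw [← hI.sum_v, hxvC0]; ring_nf
          have e3 : (1 - sig β f t PI) * (xvR + xvT) ≤ xvR + (1 - sig β f t PI) * xvT := by
            nlinarith [mul_nonneg hσI0 hI.xvR_nonneg]
          linarith
        · push_neg at hρupos
          have hρu0 : ρu * (1 - sig β f t PB) * y = 0 :=
            le_antisymm hρupos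
              (mul_nonneg (mul_nonneg hB.ρu_nonneg (by linarith)) hy0)
          rw [hρu0, hρs0]
          have e1 : 0 ≤ (1 - sig β f t PI) * xvT :=
            mul_nonneg (by linarith) hI.xvT_nonneg
          linarith [hI.xvR_nonneg]
    have hRle : xnR + ρu * (1 - sig β f t PB) * y + ρs * sig β f t PB * y ≤
        xnR' + xvR + (1 - sig β f t PI) * xvT := by linarith
    have hm := hp_mono.monotoneOn hRB_mem hRI_mem hRle
    rw [← hIendo, ← hBendo] at hm
    linarith
end
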